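/- arXiv:2509.01037 — 11 statements merged into one kernel-verified Lean document; each statement's English description precedes it below -/
import Mathlib

section
/- Let M = ⟨X | {(e,f)}⟩ be a monoid presented by one relation, and set d = ||e| − |f|| with d ≠ 0. Then for every word a over X, the length set L_M(a) is an arithmetic progression with common difference d, and the set of distances Δ(M) equals {d}. -/
/-- Two words over `X` represent the same element of the presented monoid `⟨X | R⟩`. -/
def eqM {X : Type*} (R : Set (FreeMonoid X × FreeMonoid X)) (a b : FreeMonoid X) : Prop :=
  conGen (fun x y => (x, y) ∈ R) a b

/-- The length set of a word `a` in `⟨X | R⟩`. -/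
def LSet {X : Type*} (R : Set (FreeMonoid X × FreeMonoid X)) (a : FreeMonoid X) : Set ℕ :=
  {n | ∃ b : FreeMonoid X, eqM R a b ∧ b.length = n}


/-- Set of distances of a set of naturals. -/
def distSet (L : Set ℕ) : Set ℕ :=
  {d | 0 < d ∧ ∃ k ∈ L, k + d ∈ L ∧ ∀ m, k < m → m < k + d → m ∉ L}

/-- The set of distances of the presented monoid `⟨X | R⟩`. -/
def DeltaM {X : Type*} (R : Set (FreeMonoid X × FreeMonoid X)) : Set ℕ :=
  ⋃ a : FreeMonoid X, distSet (LSet R a)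


/-- `L` is an arithmetic progression with difference `d`: any two elements of `L` differ by a
multiple of `d`, and every number between two elements of `L` congruent to them mod `d`
is again in `L`. -/
def IsAPWithDiff (d : ℕ) (L : Set ℕ) : Prop :=
  ∀ x ∈ L, ∀ y ∈ L, x ≤ y →
    ((d : ℤ) ∣ (y : ℤ) - (x : ℤ) ∧
      ∀ z : ℕ, x ≤ z → z ≤ y → (d : ℤ) ∣ (z : ℤ) - (x : ℤ) → z ∈ L)

section Aux

variable {X : Type*} (e f : FreeMonoid X)

/-- One elementary rewrite. -/
def MStep (a b : FreeMonoid X) : Prop :=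
  ∃ u v : FreeMonoid X, (a = u * e * v ∧ b = u * f * v) ∨ (a = u * f * v ∧ b = u * e * v)

lemma mstep_symm : Symmetric (MStep e f) := by
  rintro a b ⟨u, v, h | h⟩
  · exact ⟨u, v, Or.inr ⟨h.2, h.1⟩⟩
  · exact ⟨u, v, Or.inl ⟨h.2, h.1⟩⟩

lemma mstep_mul_left (c : FreeMonoid X) {a b : FreeMonoid X} (h : MStep e f a b) :
    MStep e f (c * a) (c * b) := by
  obtain ⟨u, v, h | h⟩ := h
  · exact ⟨c * u, v, Or.inl ⟨by rw [h.1]; simp [mul_assoc],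
      by rw [h.2]; simp [mul_assoc]⟩⟩
  · exact ⟨c * u, v, Or.inr ⟨by rw [h.1]; simp [mul_assoc],
      by rw [h.2]; simp [mul_assoc]⟩⟩

lemma mstep_mul_right (c : FreeMonoid X) {a b : FreeMonoid X} (h : MStep e f a b) :
    MStep e f (a * c) (b * c) := by
  obtain ⟨u, v, h | h⟩ := h
  · exact ⟨u, v * c, Or.inl ⟨by rw [h.1]; simp [mul_assoc],
      by rw [h.2]; simp [mul_assoc]⟩⟩
  · exact ⟨u, v * c, Or.inr ⟨by rw [h.1]; simp [mul_assoc],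
      by rw [h.2]; simp [mul_assoc]⟩⟩

lemma rtg_mul_left (c : FreeMonoid X) {a b : FreeMonoid X}
    (h : Relation.ReflTransGen (MStep e f) a b) :
    Relation.ReflTransGen (MStep e f) (c * a) (c * b) :=
  Relation.ReflTransGen.lift (c * ·) (fun _ _ h => mstep_mul_left e f c h) _ _ h

lemma rtg_mul_right (c : FreeMonoid X) {a b : FreeMonoid X}
    (h : Relation.ReflTransGen (MStep e f) a b) :
    Relation.ReflTransGen (MStep e f) (a * c) (b * c) :=
  Relation.ReflTransGen.lift (· * c) (fun _ _ h => mstep_mul_right e f c h) _ _ h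

/-- The reflexive-transitive closure of `MStep` is a congruence. -/
def mstepCon : Con (FreeMonoid X) where
  r := Relation.ReflTransGen (MStep e f)
  iseqv := ⟨fun _ => .refl, fun h => (haveI : Std.Symm (MStep e f) := ⟨mstep_symm e f⟩; Relation.ReflTransGen.symmetric.symm _ _ h),
    fun h h' => h.trans h'⟩
  mul' := by
    intro a b c d h h'
    exact (rtg_mul_right e f c h).trans (rtg_mul_left e f b h')

lemma mstep_eqM {a b : FreeMonoid X} (h : MStep e f a b) :
    eqM {(e, f)} a b := by
  have base : eqM {(e, f)} e f := ConGen.Rel.of _ _ rfl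
  obtain ⟨u, v, h | h⟩ := h
  · rw [h.1, h.2]
    exact (conGen _).mul ((conGen _).mul ((conGen _).refl u) base) ((conGen _).refl v)
  · rw [h.1, h.2]
    exact (conGen _).mul ((conGen _).mul ((conGen _).refl u)
      ((conGen _).symm base)) ((conGen _).refl v)

lemma eqM_iff_rtg {a b : FreeMonoid X} :
    eqM {(e, f)} a b ↔ Relation.ReflTransGen (MStep e f) a b := by
  constructor
  · intro h
    have hle : conGen (fun x y => (x, y) ∈ ({(e, f)} : Set (FreeMonoid X × FreeMonoid X)))
        ≤ mstepCon e f := by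
      apply Con.conGen_le.2
      intro x y hxy
      have hx : x = e ∧ y = f := by
        simpa [Prod.ext_iff] using hxy
      rw [hx.1, hx.2]
      exact Relation.ReflTransGen.single ⟨1, 1, Or.inl ⟨by simp, by simp⟩⟩
    exact hle h
  · intro h
    induction h with
    | refl => exact (conGen _).refl a
    | tail _ hbc ih => exact (conGen _).trans ih (mstep_eqM e f hbc)

variable {d : ℕ} (hd : (d : ℤ) = |(e.length : ℤ) - (f.length : ℤ)|)

include hd in
lemma mstep_len {a b : FreeMonoid X} (h : MStep e f a b) :
    (b.length : ℤ) - a.length = d ∨ (b.length : ℤ) - a.length = -d := by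
  obtain ⟨u, v, ⟨h1, h2⟩ | ⟨h1, h2⟩⟩ := h <;>
    rw [h1, h2] <;> simp only [FreeMonoid.length_mul] <;> push_cast <;>
    rcases abs_cases ((e.length : ℤ) - f.length) with ⟨ha, _⟩ | ⟨ha, _⟩ <;> omega

include hd in
lemma rtg_len_dvd {a b : FreeMonoid X} (h : Relation.ReflTransGen (MStep e f) a b) :
    (d : ℤ) ∣ (b.length : ℤ) - a.length := by
  induction h with
  | refl => simp
  | tail _ hbc ih =>
    rcases mstep_len e f hd hbc with hc | hc
    · obtain ⟨k, hk⟩ := ih; exact ⟨k + 1, by rw [mul_add, mul_one]; omega⟩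
    · obtain ⟨k, hk⟩ := ih; exact ⟨k - 1, by rw [mul_sub, mul_one]; omega⟩

include hd in
lemma walk_lemma {a b : FreeMonoid X} (h : Relation.ReflTransGen (MStep e f) a b)
    (z : ℕ) (hz1 : a.length ≤ z) (hz2 : z ≤ b.length)
    (hz3 : (d : ℤ) ∣ (z : ℤ) - a.length) :
    ∃ c : FreeMonoid X, Relation.ReflTransGen (MStep e f) a c ∧ c.length = z := by
  induction h with
  | refl => exact ⟨a, .refl, by omega⟩
  | @tail b c hab hbc ih =>
    by_cases hzb : z ≤ b.length
    · obtain ⟨w, hw1, hw2⟩ := ih hzb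
      exact ⟨w, hw1, hw2⟩
    · push_neg at hzb
      rcases mstep_len e f hd hbc with hc | hc
      · -- c.length = b.length + d
        have hdvd : (d : ℤ) ∣ (z : ℤ) - b.length := by
          obtain ⟨k1, hk1⟩ := hz3
          obtain ⟨k2, hk2⟩ := rtg_len_dvd e f hd hab
          exact ⟨k1 - k2, by rw [mul_sub]; omega⟩
        have hle : (d : ℤ) ≤ (z : ℤ) - b.length :=
          Int.le_of_dvd (by omega) hdvd
        have : z = c.length := by omega
        exact ⟨c, hab.tail hbc, this.symm⟩
      · omega

end Aux

/-- In a monoid presented by a single relation `(e, f)` with `d = ||e| - |f|| ≠ 0`, every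
length set is an arithmetic progression with difference `d`, and `Δ(M) = {d}`. -/
theorem stmt_5 {X : Type*} (e f : FreeMonoid X) (d : ℕ)
    (hd : (d : ℤ) = |(e.length : ℤ) - (f.length : ℤ)|) (hd0 : d ≠ 0) :
    (∀ a : FreeMonoid X, IsAPWithDiff d (LSet {(e, f)} a)) ∧
      DeltaM {(e, f)} = {d} := by
  have hAP : ∀ a : FreeMonoid X, IsAPWithDiff d (LSet {(e, f)} a) := by
    intro a x hx y hy hxy
    obtain ⟨b, hab, hbx⟩ := hx
    obtain ⟨c, hac, hcy⟩ := hy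
    have hbc : Relation.ReflTransGen (MStep e f) b c :=
      (eqM_iff_rtg e f).1 ((conGen _).trans ((conGen _).symm hab) hac)
    constructor
    · have := rtg_len_dvd e f hd hbc
      rw [hbx, hcy] at this
      exact this
    · intro z hz1 hz2 hz3
      obtain ⟨w, hw1, hw2⟩ := walk_lemma e f hd hbc z (by omega) (by omega)
        (by rw [hbx]; exact hz3)
      exact ⟨w, (conGen _).trans hab ((eqM_iff_rtg e f).2 hw1), hw2⟩
  refine ⟨hAP, ?_⟩
  ext t
  simp only [DeltaM, Set.mem_iUnion, Set.mem_singleton_iff]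
  constructor
  · rintro ⟨a, ht0, k, hk, hkt, hgap⟩
    have h := hAP a k hk (k + t) hkt (by omega)
    obtain ⟨hdvd, hbetween⟩ := h
    have hddvd : (d : ℤ) ∣ (t : ℤ) := by simpa using hdvd
    have hdt : d ≤ t := by
      have := Int.le_of_dvd (by exact_mod_cast ht0) hddvd
      exact_mod_cast this
    by_contra hne
    have hlt : d < t := lt_of_le_of_ne hdt (fun h => hne h.symm)
    have : k + d ∈ LSet {(e, f)} a := hbetween (k + d) (by omega) (by omega) ⟨1, by push_cast; ring⟩
    exact hgap (k + d) (by omega) (by omega) this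
  · intro ht
    rw [ht]
    refine ⟨e, Nat.pos_of_ne_zero hd0, min e.length f.length, ?_, ?_, ?_⟩
    · rcases le_total e.length f.length with h | h
      · exact ⟨e, (conGen _).refl e, by omega⟩
      · exact ⟨f, ConGen.Rel.of _ _ rfl, by omega⟩
    · rcases le_total e.length f.length with h | h
      · refine ⟨f, ConGen.Rel.of _ _ rfl, ?_⟩
        rcases abs_cases ((e.length : ℤ) - f.length) with ⟨ha, _⟩ | ⟨ha, _⟩ <;> omega
      · refine ⟨e, (conGen _).refl e, ?_⟩
        rcases abs_cases ((e.length : ℤ) - f.length) with ⟨ha, _⟩ | ⟨ha, _⟩ <;> omega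
    · rintro m hm1 hm2 ⟨b, heb, hbm⟩
      have hdvd : (d : ℤ) ∣ (b.length : ℤ) - e.length :=
        rtg_len_dvd e f hd ((eqM_iff_rtg e f).1 heb)
      have hdvd2 : (d : ℤ) ∣ (m : ℤ) - (min e.length f.length : ℕ) := by
        obtain ⟨k, hk⟩ := hdvd
        rcases le_total e.length f.length with h | h
        · exact ⟨k, by rw [min_eq_left h]; omega⟩
        · refine ⟨k + 1, ?_⟩
          rw [min_eq_right h]
          rw [mul_add, mul_one]
          rcases abs_cases ((e.length : ℤ) - f.length) with ⟨ha, _⟩ | ⟨ha, _⟩ <;> push_cast <;> omega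
      have := Int.le_of_dvd (by push_cast; omega) hdvd2
      push_cast at this
      omega
end

section
/- Let M = ⟨X | R⟩ with R symmetric, and suppose a, b are words over X with a =_M b, |b| < |a|, and no word c representing the same element of M satisfies |b| < |c| < |a|. Then there exists (e,f) ∈ R with |a| − |b| ≤ |e| − |f|. -/
/-- One elementary rewrite. -/
def Step {X : Type*} (R : Set (FreeMonoid X × FreeMonoid X)) (x y : FreeMonoid X) : Prop :=
  ∃ u e f v, (e, f) ∈ R ∧ x = u * e * v ∧ y = u * f * v

theorem step_symm {X : Type*} {R : Set (FreeMonoid X × FreeMonoid X)}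
    (hsym : ∀ p ∈ R, (p.2, p.1) ∈ R) : Symmetric (Step R) := by
  rintro x y ⟨u, e, f, v, hef, hx, hy⟩
  exact ⟨u, f, e, v, hsym (e, f) hef, hy, hx⟩

theorem step_eqM {X : Type*} {R : Set (FreeMonoid X × FreeMonoid X)}
    {x y : FreeMonoid X} (h : Step R x y) : eqM R x y := by
  obtain ⟨u, e, f, v, hef, hx, hy⟩ := h
  subst hx hy
  show ConGen.Rel _ _ _
  exact .mul (.mul (.refl u) (.of e f hef)) (.refl v)

theorem chain_eqM {X : Type*} {R : Set (FreeMonoid X × FreeMonoid X)}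
    {x y : FreeMonoid X} (h : Relation.ReflTransGen (Step R) x y) : eqM R x y := by
  induction h with
  | refl => exact (ConGen.Rel.refl x : ConGen.Rel _ x x)
  | tail _ hstep ih =>
      exact (ConGen.Rel.trans ih (step_eqM hstep) :
        ConGen.Rel _ _ _)

/-- The reflexive-transitive closure of `Step` forms a congruence. -/
def stepCon {X : Type*} (R : Set (FreeMonoid X × FreeMonoid X))
    (hsym : ∀ p ∈ R, (p.2, p.1) ∈ R) : Con (FreeMonoid X) where
  r := Relation.ReflTransGen (Step R)
  iseqv := ⟨fun _ => .refl,
    fun h => by haveI : Std.Symm (Step R) := ⟨step_symm hsym⟩; exact Std.Symm.symm _ _ h,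
    fun h h' => h.trans h'⟩
  mul' := by
    intro a b c d hab hcd
    have h1 : Relation.ReflTransGen (Step R) (a * c) (b * c) := by
      refine Relation.ReflTransGen.lift (· * c) ?_ _ _ hab
      rintro x y ⟨u, e, f, v, hef, hx, hy⟩
      exact ⟨u, e, f, v * c, hef, by simp [hx, mul_assoc], by simp [hy, mul_assoc]⟩
    have h2 : Relation.ReflTransGen (Step R) (b * c) (b * d) := by
      refine Relation.ReflTransGen.lift (b * ·) ?_ _ _ hcd
      rintro x y ⟨u, e, f, v, hef, hx, hy⟩
      exact ⟨b * u, e, f, v, hef, by simp [hx, mul_assoc], by simp [hy, mul_assoc]⟩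
    exact h1.trans h2

theorem eqM_chain {X : Type*} {R : Set (FreeMonoid X × FreeMonoid X)}
    (hsym : ∀ p ∈ R, (p.2, p.1) ∈ R)
    {x y : FreeMonoid X} (h : eqM R x y) : Relation.ReflTransGen (Step R) x y := by
  have := (Con.conGen_le (c := stepCon R hsym)
    (r := fun x y : FreeMonoid X => (x, y) ∈ R)).2
    (fun x y hxy => Relation.ReflTransGen.single ⟨1, x, y, 1, hxy, by simp, by simp⟩)
  exact this h

/-- If `R` is symmetric, `a =_M b`, `|b| < |a|`, and no word `c` with `c =_M a` has length
strictly between `|b|` and `|a|`, then some relation `(e, f) ∈ R` satisfies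
`|a| - |b| ≤ |e| - |f|`. -/
theorem stmt_7 {X : Type*} (R : Set (FreeMonoid X × FreeMonoid X))
    (hsym : ∀ p ∈ R, (p.2, p.1) ∈ R)
    (a b : FreeMonoid X) (hab : eqM R a b) (hlt : b.length < a.length)
    (hgap : ∀ c : FreeMonoid X, eqM R a c →
      ¬ (b.length < c.length ∧ c.length < a.length)) :
    ∃ p ∈ R, (a.length : ℤ) - (b.length : ℤ) ≤ (p.1.length : ℤ) - (p.2.length : ℤ) := by
  set L := a.length with hL
  set l := b.length with hl
  have key : ∀ x : FreeMonoid X, Relation.ReflTransGen (Step R) x b →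
      L ≤ x.length →
      (∀ c : FreeMonoid X, Relation.ReflTransGen (Step R) x c →
        ¬ (l < c.length ∧ c.length < L)) →
      ∃ p ∈ R, (L : ℤ) - (l : ℤ) ≤ (p.1.length : ℤ) - (p.2.length : ℤ) := by
    intro x hchain
    induction hchain using Relation.ReflTransGen.head_induction_on with
    | refl =>
        intro hLx _
        omega
    | head hstep _ ih =>
        rename_i x c _
        intro hLx hgap'
        have hcgap := hgap' c (Relation.ReflTransGen.single hstep)
        by_cases hc : L ≤ c.length
        · exact ih hc (fun d hd => hgap' d ((Relation.ReflTransGen.single hstep).trans hd))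
        · -- crossing step
          have hcl : c.length ≤ l := by omega
          obtain ⟨u, e, f, v, hef, hx, hc'⟩ := hstep
          refine ⟨(e, f), hef, ?_⟩
          have h1 : x.length = u.length + e.length + v.length := by
            simp [hx, FreeMonoid.length_mul]
          have h2 : c.length = u.length + f.length + v.length := by
            simp [hc', FreeMonoid.length_mul]
          simp only []
          omega
  exact key a (eqM_chain hsym hab) le_rfl
    (fun c hc => hgap c (chain_eqM hc))
end

section
/- Let M = ⟨X | R⟩ with R symmetric, and let N be the additive submonoid of ℤ generated by {|a| − |b| : (a,b) ∈ R}. If N ≠ {0}, then N = dℤ where d = gcd(N), and moreover d = min(Δ(M)). -/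
section aux

variable {X : Type*} (R : Set (FreeMonoid X × FreeMonoid X))

/-- N is closed under negation when R is symmetric. -/
lemma aux_neg_mem (hsym : ∀ p ∈ R, (p.2, p.1) ∈ R)
    {z : ℤ} (hz : z ∈ AddSubmonoid.closure
      {z : ℤ | ∃ p ∈ R, z = (p.1.length : ℤ) - (p.2.length : ℤ)}) :
    -z ∈ AddSubmonoid.closure
      {z : ℤ | ∃ p ∈ R, z = (p.1.length : ℤ) - (p.2.length : ℤ)} := by
  induction hz using AddSubmonoid.closure_induction with
  | mem x hx =>
    obtain ⟨p, hp, rfl⟩ := hx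
    apply AddSubmonoid.subset_closure
    exact ⟨(p.2, p.1), hsym p hp, by push_cast; ring⟩
  | zero => simpa using AddSubmonoid.zero_mem _
  | add x y _ _ hx hy => simpa [neg_add] using AddSubmonoid.add_mem _ hy hx

/-- Length-difference invariant. -/
lemma aux_invariant (hsym : ∀ p ∈ R, (p.2, p.1) ∈ R)
    {a b : FreeMonoid X} (h : eqM R a b) :
    (a.length : ℤ) - b.length ∈ AddSubmonoid.closure
      {z : ℤ | ∃ p ∈ R, z = (p.1.length : ℤ) - (p.2.length : ℤ)} := by
  have h' : ConGen.Rel (fun x y => (x, y) ∈ R) a b := h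
  clear h
  induction h' with
  | of x y hxy => exact AddSubmonoid.subset_closure ⟨(x, y), hxy, rfl⟩
  | refl x => simpa using AddSubmonoid.zero_mem _
  | symm _ ih => simpa using aux_neg_mem R hsym ih
  | trans _ _ ih1 ih2 =>
    have := AddSubmonoid.add_mem _ ih1 ih2
    convert this using 1; ring
  | mul _ _ ih1 ih2 =>
    have := AddSubmonoid.add_mem _ ih1 ih2
    simp only [FreeMonoid.length_mul]
    convert this using 1; push_cast; ring

/-- Realization: every element of N is a length difference of two equal words. -/
lemma aux_realize {z : ℤ}
    (hz : z ∈ AddSubmonoid.closure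
      {z : ℤ | ∃ p ∈ R, z = (p.1.length : ℤ) - (p.2.length : ℤ)}) :
    ∃ a b : FreeMonoid X, eqM R a b ∧ (a.length : ℤ) - b.length = z := by
  induction hz using AddSubmonoid.closure_induction with
  | mem x hx =>
    obtain ⟨p, hp, rfl⟩ := hx
    exact ⟨p.1, p.2, ConGen.Rel.of _ _ hp, rfl⟩
  | zero => exact ⟨1, 1, ConGen.Rel.refl 1, by simp⟩
  | add x y _ _ hx hy =>
    obtain ⟨a1, b1, h1, e1⟩ := hx
    obtain ⟨a2, b2, h2, e2⟩ := hy
    refine ⟨a1 * a2, b1 * b2, ConGen.Rel.mul h1 h2, ?_⟩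
    simp only [FreeMonoid.length_mul]
    push_cast
    omega

end aux

/-- If `R` is symmetric and the additive submonoid `N ⊆ ℤ` generated by the length
differences of the relations is nontrivial, then `N = dℤ` where `d > 0` (so `d = gcd N`),
and `d` is the minimum of `Δ(M)`. -/
theorem stmt_8 {X : Type*} (R : Set (FreeMonoid X × FreeMonoid X))
    (hsym : ∀ p ∈ R, (p.2, p.1) ∈ R)
    (N : AddSubmonoid ℤ)
    (hN : N = AddSubmonoid.closure
      {z : ℤ | ∃ p ∈ R, z = (p.1.length : ℤ) - (p.2.length : ℤ)})
    (hNbot : N ≠ ⊥) :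
    ∃ d : ℕ, 0 < d ∧ (N : Set ℤ) = {z : ℤ | (d : ℤ) ∣ z} ∧ IsLeast (DeltaM R) d := by
  subst hN
  set S : Set ℤ := {z : ℤ | ∃ p ∈ R, z = (p.1.length : ℤ) - (p.2.length : ℤ)} with hS
  set G : AddSubgroup ℤ :=
    { AddSubmonoid.closure S with
      neg_mem' := fun hz => aux_neg_mem R hsym hz } with hG
  have hGmem : ∀ z : ℤ, z ∈ G ↔ z ∈ AddSubmonoid.closure S := fun z => Iff.rfl
  obtain ⟨g, hg⟩ := Int.subgroup_cyclic G
  have hg0 : g ≠ 0 := by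
    rintro rfl
    apply hNbot
    ext z
    simp only [AddSubmonoid.mem_bot]
    constructor
    · intro hz
      have : z ∈ G := hz
      rw [hg, AddSubgroup.mem_closure_singleton] at this
      obtain ⟨n, hn⟩ := this
      simpa using hn.symm
    · rintro rfl; exact AddSubmonoid.zero_mem _
  set d : ℕ := g.natAbs with hd
  have hd0 : 0 < d := Int.natAbs_pos.mpr hg0
  have hmem : ∀ z : ℤ, z ∈ AddSubmonoid.closure S ↔ (d : ℤ) ∣ z := by
    intro z
    rw [← hGmem, hg, AddSubgroup.mem_closure_singleton]
    constructor
    · rintro ⟨n, rfl⟩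
      exact Int.natAbs_dvd.mpr ⟨n, by rw [smul_eq_mul, mul_comm]⟩
    · rintro hdv
      obtain ⟨n, hn⟩ := Int.natAbs_dvd.mp hdv
      exact ⟨n, by rw [smul_eq_mul, mul_comm]; exact hn.symm⟩
  refine ⟨d, hd0, by ext z; exact hmem z, ?_, ?_⟩
  · -- d ∈ DeltaM R
    have hdN : (d : ℤ) ∈ AddSubmonoid.closure S := (hmem d).mpr dvd_rfl
    obtain ⟨a, b, hab, hlen⟩ := aux_realize R hdN
    have hblen : b.length + d = a.length := by omega
    refine Set.mem_iUnion.mpr ⟨a, hd0, b.length, ⟨b, hab, rfl⟩, ?_, ?_⟩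
    · rw [hblen]; exact ⟨a, ConGen.Rel.refl a, rfl⟩
    · rintro m hm1 hm2 ⟨c, hac, rfl⟩
      have hc := (hmem _).mp (aux_invariant R hsym hac)
      have hpos : (0:ℤ) < (a.length : ℤ) - c.length := by omega
      have hlt : (a.length : ℤ) - c.length < d := by omega
      have := Int.le_of_dvd hpos hc
      omega
  · -- lower bound
    rintro e he
    obtain ⟨a, ⟨he0, k, ⟨b1, hb1, hb1l⟩, ⟨b2, hb2, hb2l⟩, -⟩⟩ := Set.mem_iUnion.mp he
    have h1 := (hmem _).mp (aux_invariant R hsym hb1)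
    have h2 := (hmem _).mp (aux_invariant R hsym hb2)
    have hdiff : (d : ℤ) ∣ ((b2.length : ℤ) - b1.length) := by
      have := dvd_sub h1 h2
      have heq : ((a.length : ℤ) - b1.length) - ((a.length : ℤ) - b2.length)
          = (b2.length : ℤ) - b1.length := by ring
      rwa [heq] at this
    rw [hb1l, hb2l] at hdiff
    have hdd : (d : ℤ) ∣ (e : ℤ) := by
      have h3 : ((k + e : ℕ) : ℤ) - k = (e : ℤ) := by push_cast; ring
      rwa [h3] at hdiff
    exact_mod_cast Int.le_of_dvd (by exact_mod_cast he0) hdd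
end

section
/- Let M = ⟨X | R⟩ where the set {|a| − |b| : (a,b) ∈ R} ⊆ ℤ is finite. Then the set of distances Δ(M) is finite. -/
lemma crossing (g : ℕ → ℕ) (t n : ℕ) (h0 : g 0 < t) (hn : t ≤ g n) :
    ∃ j, g j < t ∧ t ≤ g (j + 1) := by
  induction n with
  | zero => omega
  | succ n ih =>
    by_cases h : t ≤ g n
    · exact ih h
    · exact ⟨n, by omega, hn⟩

lemma chain_of_rel {X : Type*} (R : Set (FreeMonoid X × FreeMonoid X)) (N : ℕ)
    (hN : ∀ p ∈ R, p.1.length ≤ p.2.length + N ∧ p.2.length ≤ p.1.length + N)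
    {b c : FreeMonoid X} (h : ConGen.Rel (fun x y => (x, y) ∈ R) b c) :
    ∃ (n : ℕ) (f : ℕ → FreeMonoid X), f 0 = b ∧ (∀ i, n ≤ i → f i = c) ∧
      (∀ i, eqM R b (f i)) ∧
      (∀ i, (f i).length ≤ (f (i+1)).length + N ∧ (f (i+1)).length ≤ (f i).length + N) := by
  induction h with
  | of x y hxy =>
    refine ⟨1, fun i => if i = 0 then x else y, by simp, ?_, ?_, ?_⟩
    · intro i hi
      show (if i = 0 then x else y) = y
      rw [if_neg (by omega)]
    · intro i
      show eqM R x (if i = 0 then x else y)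
      by_cases hi : i = 0
      · rw [if_pos hi]
        exact (conGen _).refl x
      · rw [if_neg hi]
        exact ConGen.Rel.of x y hxy
    · intro i
      show (if i = 0 then x else y).length ≤ (if i + 1 = 0 then x else y).length + N ∧
        (if i + 1 = 0 then x else y).length ≤ (if i = 0 then x else y).length + N
      by_cases hi : i = 0
      · rw [if_pos hi, if_neg (by omega)]
        exact hN (x, y) hxy
      · rw [if_neg hi, if_neg (by omega)]
        exact ⟨Nat.le_add_right _ _, Nat.le_add_right _ _⟩
  | refl x =>
    exact ⟨0, fun _ => x, rfl, fun _ _ => rfl, fun _ => (conGen _).refl x,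
      fun _ => ⟨Nat.le_add_right _ _, Nat.le_add_right _ _⟩⟩
  | @symm x y h ih =>
    obtain ⟨n, f, hf0, hfn, hfe, hfs⟩ := ih
    refine ⟨n, fun i => f (n - i), ?_, ?_, ?_, ?_⟩
    · show f (n - 0) = y
      rw [Nat.sub_zero]; exact hfn n le_rfl
    · intro i hi
      show f (n - i) = x
      rw [Nat.sub_eq_zero_of_le hi]; exact hf0
    · intro i
      exact (conGen _).trans ((conGen _).symm h) (hfe (n - i))
    · intro i
      show (f (n - i)).length ≤ (f (n - (i+1))).length + N ∧
        (f (n - (i+1))).length ≤ (f (n - i)).length + N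
      rcases le_or_gt n i with hi | hi
      · rw [Nat.sub_eq_zero_of_le hi, Nat.sub_eq_zero_of_le (by omega)]
        exact ⟨Nat.le_add_right _ _, Nat.le_add_right _ _⟩
      · have h1 : n - i = (n - (i+1)) + 1 := by omega
        rw [h1]
        exact ⟨(hfs (n - (i+1))).2, (hfs (n - (i+1))).1⟩
  | @trans x y z h1 h2 ih1 ih2 =>
    obtain ⟨n, f, hf0, hfn, hfe, hfs⟩ := ih1
    obtain ⟨m, g, hg0, hgm, hge, hgs⟩ := ih2
    refine ⟨n + m, fun i => if i ≤ n then f i else g (i - n), ?_, ?_, ?_, ?_⟩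
    · dsimp only; rw [if_pos (Nat.zero_le n)]; exact hf0
    · intro i hi
      dsimp only
      by_cases h : i ≤ n
      · have hin : i = n := by omega
        have hm0 : m = 0 := by omega
        rw [if_pos h, hin, hfn n le_rfl, ← hg0, ← hgm 0 hm0.le]
      · rw [if_neg h]
        exact hgm (i - n) (by omega)
    · intro i
      dsimp only
      by_cases h : i ≤ n
      · rw [if_pos h]; exact hfe i
      · rw [if_neg h]
        exact (conGen _).trans h1 (hge (i - n))
    · intro i
      show (if i ≤ n then f i else g (i - n)).length ≤
          (if i + 1 ≤ n then f (i+1) else g (i + 1 - n)).length + N ∧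
        (if i + 1 ≤ n then f (i+1) else g (i + 1 - n)).length ≤
          (if i ≤ n then f i else g (i - n)).length + N
      rcases lt_trichotomy i n with hi | hi | hi
      · by_cases h2' : i + 1 ≤ n
        · rw [if_pos hi.le, if_pos h2']
          exact hfs i
        · have hin : i + 1 = n := by omega
          rw [if_pos hi.le, if_neg h2', hin, Nat.sub_self, hg0, ← hfn n le_rfl, ← hin]
          exact hfs i
      · subst hi
        rw [if_pos le_rfl, if_neg (by omega), hfn i le_rfl, ← hg0,
          show i + 1 - i = 0 + 1 by omega]
        exact hgs 0
      · rw [if_neg (by omega), if_neg (by omega), show i + 1 - n = (i - n) + 1 by omega]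
        exact hgs (i - n)
  | @mul w x y z h1 h2 ih1 ih2 =>
    obtain ⟨n, f, hf0, hfn, hfe, hfs⟩ := ih1
    obtain ⟨m, g, hg0, hgm, hge, hgs⟩ := ih2
    refine ⟨n + m, fun i => if i ≤ n then f i * y else x * g (i - n), ?_, ?_, ?_, ?_⟩
    · dsimp only; rw [if_pos (Nat.zero_le n), hf0]
    · intro i hi
      dsimp only
      by_cases h : i ≤ n
      · have hin : i = n := by omega
        have hm0 : m = 0 := by omega
        rw [if_pos h, hin, hfn n le_rfl, ← hg0, ← hgm 0 hm0.le]
      · rw [if_neg h, hgm (i - n) (by omega)]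
    · intro i
      dsimp only
      by_cases h : i ≤ n
      · rw [if_pos h]
        exact (conGen _).mul (hfe i) ((conGen _).refl y)
      · rw [if_neg h]
        exact (conGen _).mul h1 (hge (i - n))
    · intro i
      show (if i ≤ n then f i * y else x * g (i - n)).length ≤
          (if i + 1 ≤ n then f (i+1) * y else x * g (i + 1 - n)).length + N ∧
        (if i + 1 ≤ n then f (i+1) * y else x * g (i + 1 - n)).length ≤
          (if i ≤ n then f i * y else x * g (i - n)).length + N
      rcases lt_trichotomy i n with hi | hi | hi
      · by_cases h2' : i + 1 ≤ n
        · rw [if_pos hi.le, if_pos h2']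
          have := hfs i
          simp only [FreeMonoid.length_mul]
          omega
        · have hin : i + 1 = n := by omega
          rw [if_pos hi.le, if_neg h2', hin, Nat.sub_self, hg0]
          have hstep := hfs i
          rw [hin, hfn n le_rfl] at hstep
          simp only [FreeMonoid.length_mul]
          omega
      · subst hi
        rw [if_pos le_rfl, if_neg (by omega), hfn i le_rfl,
          show i + 1 - i = 1 by omega]
        have := hgs 0
        rw [hg0] at this
        simp only [FreeMonoid.length_mul, zero_add] at *
        omega
      · rw [if_neg (by omega), if_neg (by omega), show i + 1 - n = (i - n) + 1 by omega]
        have := hgs (i - n)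
        simp only [FreeMonoid.length_mul]
        omega

/-- If the set of length differences of the relations is finite, then `Δ(M)` is finite. -/
theorem stmt_9 {X : Type*} (R : Set (FreeMonoid X × FreeMonoid X))
    (hfin : {z : ℤ | ∃ p ∈ R, z = (p.1.length : ℤ) - (p.2.length : ℤ)}.Finite) :
    (DeltaM R).Finite := by
  obtain ⟨N, hNb⟩ := (hfin.image Int.natAbs).bddAbove
  have hN : ∀ p ∈ R, p.1.length ≤ p.2.length + N ∧ p.2.length ≤ p.1.length + N := by
    intro p hp
    have : ((p.1.length : ℤ) - p.2.length).natAbs ≤ N :=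
      hNb ⟨_, ⟨p, hp, rfl⟩, rfl⟩
    omega
  apply Set.Finite.subset (Set.finite_Iic N)
  rintro d hd
  simp only [DeltaM, Set.mem_iUnion] at hd
  obtain ⟨a, hdpos, k, hk, hkd, hgap⟩ := hd
  obtain ⟨b, hab, hb⟩ := hk
  obtain ⟨c, hac, hc⟩ := hkd
  have hbc : ConGen.Rel (fun x y => (x, y) ∈ R) b c :=
    (conGen _).trans ((conGen _).symm hab) hac
  obtain ⟨n, f, hf0, hfn, hfe, hfs⟩ := chain_of_rel R N hN hbc
  have hlen : ∀ i, (f i).length ∈ LSet R a :=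
    fun i => ⟨f i, (conGen _).trans hab (hfe i), rfl⟩
  have h0 : (f 0).length < k + d := by rw [hf0, hb]; omega
  have hn' : k + d ≤ (f n).length := by rw [hfn n le_rfl, hc]
  obtain ⟨j, hj1, hj2⟩ := crossing (fun i => (f i).length) (k + d) n h0 hn'
  have hjL := hlen j
  have hjk : (f j).length ≤ k := by
    by_contra h
    exact hgap _ (by omega) hj1 hjL
  have := (hfs j).2
  simp only [Set.mem_Iic]
  omega
end

section
/- Let M be a monoid that embeds in a group, and let a ∈ M be a normal element, i.e., aM = Ma. Then aM^× = M^×a, where M^× is the group of units of M. -/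
/-- If a monoid `M` embeds in a group and `a ∈ M` is normal (`aM = Ma`), then
`a M^× = M^× a`. -/
theorem stmt_10 {M G : Type*} [Monoid M] [Group G] (f : M →* G)
    (hf : Function.Injective f) (a : M)
    (ha : ∀ b : M, (∃ m : M, b = a * m) ↔ (∃ m : M, b = m * a)) :
    ∀ b : M, (∃ u : M, IsUnit u ∧ b = a * u) ↔ (∃ u : M, IsUnit u ∧ b = u * a) := by
  have hcl : ∀ x : M, x * a = a → x = 1 := by
    intro x hx
    apply hf
    have h := congrArg f hx
    rw [map_mul] at h
    rw [map_one]
    exact mul_right_cancel (by rw [h, one_mul])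
  have hcr : ∀ x : M, a * x = a → x = 1 := by
    intro x hx
    apply hf
    have h := congrArg f hx
    rw [map_mul] at h
    rw [map_one]
    exact mul_left_cancel (by rw [h, mul_one])
  intro b
  constructor
  · rintro ⟨u, hu, rfl⟩
    lift u to Mˣ using hu
    obtain ⟨m, hm⟩ := (ha (a * u)).mp ⟨u, rfl⟩
    obtain ⟨m', hm'⟩ := (ha (a * ↑u⁻¹)).mp ⟨↑u⁻¹, rfl⟩
    have h1 : m * m' = 1 := by
      apply hcl
      rw [mul_assoc, ← hm', ← mul_assoc, ← hm, mul_assoc, Units.mul_inv, mul_one]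
    have h2 : m' * m = 1 := by
      apply hcl
      rw [mul_assoc, ← hm, ← mul_assoc, ← hm', mul_assoc, Units.inv_mul, mul_one]
    exact ⟨m, ⟨⟨m, m', h1, h2⟩, rfl⟩, hm⟩
  · rintro ⟨u, hu, rfl⟩
    lift u to Mˣ using hu
    obtain ⟨m, hm⟩ := (ha (↑u * a)).mpr ⟨u, rfl⟩
    obtain ⟨m', hm'⟩ := (ha (↑u⁻¹ * a)).mpr ⟨↑u⁻¹, rfl⟩
    have h1 : m * m' = 1 := by
      apply hcr
      rw [← mul_assoc, ← hm, mul_assoc, ← hm', ← mul_assoc, Units.mul_inv, one_mul]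
    have h2 : m' * m = 1 := by
      apply hcr
      rw [← mul_assoc, ← hm', mul_assoc, ← hm, ← mul_assoc, Units.inv_mul, one_mul]
    exact ⟨m, ⟨⟨m, m', h1, h2⟩, rfl⟩, hm⟩
end

section
/- Let M = ⟨X | R⟩ with X an irredundant generating set, and suppose M is normalizing (aM = Ma for all a ∈ M), cancellative, and BF. Then for all x, y ∈ X there exists z ∈ X with xy =_M zx. -/
section Aux

variable {X : Type*} {R : Set (FreeMonoid X × FreeMonoid X)}

lemma eqM_refl (a : FreeMonoid X) : eqM R a a := Con.refl _ a

lemma eqM_symm {a b : FreeMonoid X} (h : eqM R a b) : eqM R b a := Con.symm _ h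

lemma eqM_trans {a b c : FreeMonoid X} (h : eqM R a b) (h' : eqM R b c) : eqM R a c :=
  Con.trans _ h h'

lemma eqM_mul {a b c d : FreeMonoid X} (h : eqM R a b) (h' : eqM R c d) :
    eqM R (a * c) (b * d) := Con.mul _ h h'

lemma eqM_pow {a b : FreeMonoid X} (h : eqM R a b) (n : ℕ) : eqM R (a ^ n) (b ^ n) :=
  Con.pow _ n h

lemma length_pow (a : FreeMonoid X) (n : ℕ) : (a ^ n).length = n * a.length := by
  induction n with
  | zero => simp
  | succ n ih => rw [pow_succ, FreeMonoid.length_mul, ih]; ring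

/-- A nonempty word cannot be equal to the empty word in a BF monoid. -/
lemma eqM_one_length (hBF : (LSet R (1 : FreeMonoid X)).Finite) {a : FreeMonoid X}
    (h : eqM R a 1) (hl : a.length ≠ 0) : False := by
  have key : ∀ n : ℕ, n * a.length ∈ LSet R (1 : FreeMonoid X) := by
    intro n
    refine ⟨a ^ n, ?_, length_pow a n⟩
    have := eqM_pow (eqM_symm h) n
    simpa using this
  exact (Set.infinite_of_injective_forall_mem
    (fun m n hmn => by exact Nat.eq_of_mul_eq_mul_right (Nat.pos_of_ne_zero hl) hmn)
    key) hBF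

/-- Sandwich lemma: `a = p a q` with `p q` jointly nonempty contradicts BF. -/
lemma sandwich {a p q : FreeMonoid X} (hBF : (LSet R a).Finite)
    (h : eqM R a (p * a * q)) (hl : p.length + q.length ≠ 0) : False := by
  have key : ∀ n : ℕ, eqM R a (p ^ n * a * q ^ n) := by
    intro n
    induction n with
    | zero => simpa using eqM_refl a
    | succ n ih =>
      have step : eqM R a (p * (p ^ n * a * q ^ n) * q) :=
        eqM_trans h (eqM_mul (eqM_mul (eqM_refl p) ih) (eqM_refl q))
      have : p * (p ^ n * a * q ^ n) * q = p ^ (n + 1) * a * q ^ (n + 1) := by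
        rw [pow_succ' p, pow_succ q]
        simp only [mul_assoc]
      rwa [this] at step
  have mem : ∀ n : ℕ, a.length + n * (p.length + q.length) ∈ LSet R a := by
    intro n
    refine ⟨p ^ n * a * q ^ n, key n, ?_⟩
    rw [FreeMonoid.length_mul, FreeMonoid.length_mul, length_pow, length_pow]
    ring
  exact (Set.infinite_of_injective_forall_mem
    (fun m n hmn => by
      have := Nat.add_left_cancel hmn
      exact Nat.eq_of_mul_eq_mul_right (Nat.pos_of_ne_zero hl) this)
    mem) hBF

end Aux

/-- If `⟨X | R⟩` is normalizing, cancellative, and BF, and `X` is irredundant, then for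
all `x, y ∈ X` there exists `z ∈ X` with `x y =_M z x`. -/
theorem stmt_11 {X : Type*} (R : Set (FreeMonoid X × FreeMonoid X))
    (hirr : ∀ Y : Set X, (∀ a : FreeMonoid X, ∃ b : FreeMonoid X,
        (∀ l ∈ b.toList, l ∈ Y) ∧ eqM R a b) → Y = Set.univ)
    (hnorm : ∀ a b : FreeMonoid X,
      (∃ c : FreeMonoid X, eqM R (a * b) (c * a)) ∧
      (∃ c : FreeMonoid X, eqM R (b * a) (a * c)))
    (hcancel : ∀ a b c : FreeMonoid X,
      (eqM R (a * b) (a * c) → eqM R b c) ∧ (eqM R (b * a) (c * a) → eqM R b c))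
    (hBF : ∀ a : FreeMonoid X, (LSet R a).Finite) :
    ∀ x y : X, ∃ z : X, eqM R (FreeMonoid.of x * FreeMonoid.of y)
      (FreeMonoid.of z * FreeMonoid.of x) := by
  classical
  intro x y
  -- Main contradiction lemma: `of y` cannot equal a word of length ≠ 1.
  have final : ∀ w : FreeMonoid X, eqM R (FreeMonoid.of y) w → w.length ≠ 1 → False := by
    intro w hw hwl
    by_cases hy : y ∈ w.toList
    · obtain ⟨s, t, hst⟩ := List.append_of_mem hy
      have hww : w = FreeMonoid.ofList s * FreeMonoid.of y * FreeMonoid.ofList t := by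
        conv_lhs => rw [← FreeMonoid.ofList_toList w, hst, ← List.singleton_append,
          ← List.append_assoc]
        rw [FreeMonoid.ofList_append, FreeMonoid.ofList_append]
        rfl
      refine sandwich (hBF (FreeMonoid.of y)) (hww ▸ hw) ?_
      intro h0
      apply hwl
      rw [hww, FreeMonoid.length_mul, FreeMonoid.length_mul, FreeMonoid.length_of]
      omega
    · -- substitute `y ↦ w` everywhere
      set f : FreeMonoid X →* FreeMonoid X :=
        FreeMonoid.lift (fun t => if t = y then w else FreeMonoid.of t) with hf
      have hsub : ∀ a : FreeMonoid X,
          (∀ l ∈ (f a).toList, l ∈ ({t | t ≠ y} : Set X)) ∧ eqM R a (f a) := by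
        intro a
        induction a using FreeMonoid.recOn with
        | one => simpa using eqM_refl (1 : FreeMonoid X)
        | of_mul t a ih =>
          have hft : f (FreeMonoid.of t) = if t = y then w else FreeMonoid.of t := by
            simp [hf]
          constructor
          · intro l hl
            rw [map_mul, FreeMonoid.toList_mul, List.mem_append] at hl
            rcases hl with hl | hl
            · rw [hft] at hl
              split_ifs at hl with h
              · exact fun hly => hy (hly ▸ hl)
              · simp only [FreeMonoid.toList_of, List.mem_singleton] at hl
                exact hl ▸ h
            · exact ih.1 l hl
          · rw [map_mul]
            refine eqM_mul ?_ ih.2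
            rw [hft]
            split_ifs with h
            · exact h ▸ hw
            · exact eqM_refl _
      have := hirr {t | t ≠ y} (fun a => ⟨f a, (hsub a).1, (hsub a).2⟩)
      have hyy : y ∈ ({t | t ≠ y} : Set X) := this ▸ Set.mem_univ y
      exact hyy rfl
  obtain ⟨c, hc⟩ := (hnorm (FreeMonoid.of x) (FreeMonoid.of y)).1
  rcases hl : c.toList with _ | ⟨z1, l⟩
  · -- c = 1 : then y = 1, contradiction
    exfalso
    have hc1 : c = 1 := by
      rw [← FreeMonoid.ofList_toList c, hl]; rfl
    rw [hc1, one_mul] at hc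
    have : eqM R (FreeMonoid.of y) 1 :=
      (hcancel (FreeMonoid.of x) (FreeMonoid.of y) 1).1 (by simpa using hc)
    exact final 1 this (by simp)
  rcases l with _ | ⟨z2, l'⟩
  · -- c = of z1 : done
    refine ⟨z1, ?_⟩
    have : c = FreeMonoid.of z1 := by
      rw [← FreeMonoid.ofList_toList c, hl]; rfl
    rwa [this] at hc
  · -- |c| ≥ 2 : derive contradiction
    exfalso
    set c' : FreeMonoid X := FreeMonoid.ofList (z2 :: l') with hc'
    have hcc : c = FreeMonoid.of z1 * c' := by
      rw [← FreeMonoid.ofList_toList c, hl]; rfl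
    obtain ⟨d, hd⟩ := (hnorm (FreeMonoid.of x) c').2
    obtain ⟨e, he⟩ := (hnorm (FreeMonoid.of x) (FreeMonoid.of z1)).2
    -- x * y = z1 * c' * x = z1 * (x * d) = (z1 * x) * d = (x * e) * d = x * (e * d)
    have key : eqM R (FreeMonoid.of x * FreeMonoid.of y) (FreeMonoid.of x * (e * d)) := by
      have h1 : eqM R (FreeMonoid.of x * FreeMonoid.of y)
          (FreeMonoid.of z1 * (FreeMonoid.of x * d)) := by
        refine eqM_trans hc ?_
        rw [hcc, mul_assoc]
        exact eqM_mul (eqM_refl _) hd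
      have h2 : eqM R (FreeMonoid.of z1 * (FreeMonoid.of x * d))
          (FreeMonoid.of x * (e * d)) := by
        have : eqM R (FreeMonoid.of z1 * FreeMonoid.of x * d)
            (FreeMonoid.of x * e * d) := eqM_mul he (eqM_refl d)
        rw [mul_assoc, mul_assoc] at this
        exact this
      exact eqM_trans h1 h2
    have hyed : eqM R (FreeMonoid.of y) (e * d) :=
      (hcancel (FreeMonoid.of x) (FreeMonoid.of y) (e * d)).1 key
    -- e is not trivial
    have he1 : e.length ≠ 0 := by
      intro h0
      have : e = 1 := FreeMonoid.length_eq_zero.mp h0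
      rw [this, mul_one] at he
      have : eqM R (FreeMonoid.of z1) 1 :=
        (hcancel (FreeMonoid.of x) (FreeMonoid.of z1) 1).2 (by simpa using he)
      exact eqM_one_length (hBF 1) this (by simp)
    have hd1 : d.length ≠ 0 := by
      intro h0
      have : d = 1 := FreeMonoid.length_eq_zero.mp h0
      rw [this, mul_one] at hd
      have : eqM R c' 1 :=
        (hcancel (FreeMonoid.of x) c' 1).2 (by simpa using hd)
      refine eqM_one_length (hBF 1) this ?_
      have : c'.length = l'.length + 1 := rfl
      omega
    refine final (e * d) hyed ?_
    rw [FreeMonoid.length_mul]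
    omega
end

section
/- Every normalizing unit-cancellative monoid is acyclic: if a = bac for a, b, c ∈ M, then b and c are units. -/
private lemma unit_of_left_right {M : Type*} [Monoid M] {c l r : M}
    (hl : l * c = 1) (hr : c * r = 1) : IsUnit c := by
  have hlr : l = r := by
    calc l = l * (c * r) := by rw [hr, mul_one]
    _ = (l * c) * r := by rw [mul_assoc]
    _ = r := by rw [hl, one_mul]
  exact ⟨⟨c, r, hr, hlr ▸ hl⟩, rfl⟩

theorem stmt_12 {M : Type*} [Monoid M]
    (hnorm : ∀ a : M, {x : M | ∃ m, x = a * m} = {x : M | ∃ m, x = m * a})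
    (hucanc : ∀ a b : M, (a = a * b → IsUnit b) ∧ (a = b * a → IsUnit b)) :
    ∀ a b c : M, a = b * a * c → IsUnit b ∧ IsUnit c := by
  intro a b c h
  obtain ⟨m, hm⟩ : ∃ m, b * a = a * m := (Set.ext_iff.mp (hnorm a) (b * a)).mpr ⟨b, rfl⟩
  obtain ⟨n, hn⟩ : ∃ n, a * c = n * a := (Set.ext_iff.mp (hnorm a) (a * c)).mp ⟨c, rfl⟩
  have hmc : IsUnit (m * c) := (hucanc a (m * c)).1 (by rw [← mul_assoc, ← hm, ← h])
  have hbn : IsUnit (b * n) := (hucanc a (b * n)).2 (by rw [mul_assoc, ← hn, ← mul_assoc, ← h])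
  obtain ⟨u, hu⟩ := hmc
  obtain ⟨v, hv⟩ := hbn
  constructor
  · -- b : right inverse n * v⁻¹, left inverse from v = k * b
    obtain ⟨k, hk⟩ : ∃ k, b * n = k * b := (Set.ext_iff.mp (hnorm b) (b * n)).mp ⟨n, rfl⟩
    refine unit_of_left_right (l := (v⁻¹ : Mˣ) * k) (r := n * (v⁻¹ : Mˣ)) ?_ ?_
    · rw [mul_assoc, ← hk, ← hv]; exact v.inv_mul
    · rw [← mul_assoc, ← hv]; exact v.mul_inv
  · obtain ⟨k, hk⟩ : ∃ k, m * c = c * k := (Set.ext_iff.mp (hnorm c) (m * c)).mpr ⟨m, rfl⟩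
    refine unit_of_left_right (l := (u⁻¹ : Mˣ) * m) (r := k * (u⁻¹ : Mˣ)) ?_ ?_
    · rw [mul_assoc, ← hu]; exact u.inv_mul
    · rw [← mul_assoc, ← hk, ← hu]; exact u.mul_inv
end

section
/- Every finitely-generated normalizing unit-cancellative monoid is atomic. -/
/-- `a` is an atom of the monoid `M`: a non-unit such that whenever `a = b * c`,
either `b` or `c` is a unit. -/
def IsAtomElem {M : Type*} [Monoid M] (a : M) : Prop :=
  ¬ IsUnit a ∧ ∀ b c : M, a = b * c → IsUnit b ∨ IsUnit c

/-- `M` is atomic: every non-unit is a finite product of atoms. -/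
def IsAtomicMonoid (M : Type*) [Monoid M] : Prop :=
  ∀ a : M, ¬ IsUnit a → ∃ l : List M, (∀ x ∈ l, IsAtomElem x) ∧ l.prod = a

section Aux

variable {M : Type*} [Monoid M]

/-- In a unit-cancellative monoid, a unit product has unit factors. -/
lemma aux_unit_of_mul (hucanc : ∀ a b : M, (a = a * b → IsUnit b) ∧ (a = b * a → IsUnit b))
    {x y : M} (h : IsUnit (x * y)) : IsUnit x ∧ IsUnit y := by
  obtain ⟨u, hu⟩ := h
  set p : M := ↑u⁻¹ * x with hp
  have h1 : p * y = 1 := by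
    rw [hp, mul_assoc, ← hu]
    simp
  have he : y * p = (y * p) * (y * p) := by
    calc y * p = y * (1 * p) := by rw [one_mul]
      _ = y * ((p * y) * p) := by rw [h1]
      _ = (y * p) * (y * p) := by simp [mul_assoc]
  have hunit : IsUnit (y * p) := (hucanc _ _).1 he
  have hone : y * p = 1 := by
    obtain ⟨v, hv⟩ := hunit
    have hvv : v * v = v := by
      ext
      rw [Units.val_mul, hv]
      exact he.symm
    have : v = 1 := by
      have := congrArg (fun z => v⁻¹ * z) hvv
      simpa [← mul_assoc] using this
    rw [← hv, this, Units.val_one]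
  have hy : IsUnit y := ⟨⟨y, p, hone, h1⟩, rfl⟩
  have hpu : IsUnit p := ⟨⟨p, y, h1, hone⟩, rfl⟩
  have hx : x = ↑u * p := by
    rw [hp, ← mul_assoc, Units.mul_inv, one_mul]
  exact ⟨hx ▸ (u.isUnit.mul hpu), hy⟩

/-- In a normalizing monoid, the product of a sublist divides the product of the list. -/
lemma aux_sublist_dvd (hnorm : ∀ a : M, {x : M | ∃ m, x = a * m} = {x : M | ∃ m, x = m * a})
    {l₁ l₂ : List M} (h : l₁.Sublist l₂) : ∃ c, l₂.prod = l₁.prod * c := by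
  have swap : ∀ (a b : M), ∃ c, a * b = b * c := by
    intro a b
    have : a * b ∈ {x : M | ∃ m, x = m * b} := ⟨a, rfl⟩
    rw [← hnorm b] at this
    exact this
  induction h with
  | slnil => exact ⟨1, by simp⟩
  | @cons l₁ l₂ a h ih =>
      obtain ⟨c, hc⟩ := ih
      obtain ⟨a', ha'⟩ := swap a l₁.prod
      refine ⟨a' * c, ?_⟩
      calc (a :: l₂).prod = a * l₂.prod := List.prod_cons
        _ = a * (l₁.prod * c) := by rw [hc]
        _ = (a * l₁.prod) * c := (mul_assoc _ _ _).symm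
        _ = (l₁.prod * a') * c := by rw [ha']
        _ = l₁.prod * (a' * c) := mul_assoc _ _ _
  | @cons_cons l₁ l₂ a h ih =>
      obtain ⟨c, hc⟩ := ih
      exact ⟨c, by simp [List.prod_cons, hc, mul_assoc]⟩

end Aux

theorem stmt_13 {M : Type*} [Monoid M]
    (hfg : ∃ S : Finset M, Submonoid.closure (S : Set M) = ⊤)
    (hnorm : ∀ a : M, {x : M | ∃ m, x = a * m} = {x : M | ∃ m, x = m * a})
    (hucanc : ∀ a b : M, (a = a * b → IsUnit b) ∧ (a = b * a → IsUnit b)) :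
    IsAtomicMonoid M := by
  obtain ⟨S, hS⟩ := hfg
  by_contra hna
  simp only [IsAtomicMonoid, not_forall] at hna
  obtain ⟨a₀, ha₀, hbad₀⟩ := hna
  -- Bad elements: non-units with no atomic factorization
  set Bad : M → Prop := fun a => ¬ IsUnit a ∧
    ¬ ∃ l : List M, (∀ x ∈ l, IsAtomElem x) ∧ l.prod = a with hBad
  have hb₀ : Bad a₀ := ⟨ha₀, hbad₀⟩
  -- every bad element is a proper multiple of a bad element
  have key : ∀ a, Bad a → ∃ a', Bad a' ∧ ∃ c, ¬ IsUnit c ∧ a = a' * c := by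
    intro a ha
    have hnotatom : ¬ IsAtomElem a := by
      intro hat
      exact ha.2 ⟨[a], by simpa using hat, by simp⟩
    simp only [IsAtomElem, not_and, not_forall] at hnotatom
    obtain ⟨b, c, habc, hnbc⟩ := hnotatom ha.1
    push_neg at hnbc
    obtain ⟨hb, hc⟩ := hnbc
    -- a = c * d with d a non-unit (normalizing)
    have hacd : ∃ d, a = c * d := by
      have : a ∈ {x : M | ∃ m, x = m * c} := ⟨b, habc⟩
      rw [← hnorm c] at this
      exact this
    obtain ⟨d, had⟩ := hacd
    have hd : ¬ IsUnit d := by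
      intro hdu
      obtain ⟨u, hu⟩ := hdu
      have hca : c = a * ↑u⁻¹ := by rw [had, ← hu, mul_assoc]; simp
      have : ∃ e, c * ↑u⁻¹ = e * c := by
        have : c * (↑u⁻¹ : M) ∈ {x : M | ∃ m, x = c * m} := ⟨↑u⁻¹, rfl⟩
        rw [hnorm c] at this
        exact this
      obtain ⟨e, he⟩ := this
      have : c = (b * e) * c := by
        calc c = a * ↑u⁻¹ := hca
          _ = (b * c) * ↑u⁻¹ := by rw [habc]
          _ = b * (c * ↑u⁻¹) := mul_assoc _ _ _
          _ = b * (e * c) := by rw [he]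
          _ = (b * e) * c := (mul_assoc _ _ _).symm
      have := (hucanc c (b * e)).2 this
      exact hb (aux_unit_of_mul hucanc this).1
    -- b or c must be bad
    by_cases hbb : Bad b
    · exact ⟨b, hbb, c, hc, habc⟩
    by_cases hcb : Bad c
    · exact ⟨c, hcb, d, hd, had⟩
    · exfalso
      simp only [hBad, not_and, not_not] at hbb hcb
      obtain ⟨lb, hlb, hlbp⟩ := hbb hb
      obtain ⟨lc, hlc, hlcp⟩ := hcb hc
      exact ha.2 ⟨lb ++ lc, by
        intro x hx
        rcases List.mem_append.1 hx with h | h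
        exacts [hlb x h, hlc x h], by simp [hlbp, hlcp, habc]⟩
  -- build an infinite descending chain of bad elements
  let g : ℕ → {x : M // Bad x} := fun n => Nat.rec ⟨a₀, hb₀⟩
    (fun _ p => ⟨(key p.1 p.2).choose, (key p.1 p.2).choose_spec.1⟩) n
  have gstep : ∀ n, ∃ c, ¬ IsUnit c ∧ (g n).1 = (g (n+1)).1 * c := by
    intro n
    exact (key (g n).1 (g n).2).choose_spec.2
  -- transitive chain
  have gchain : ∀ m n, m < n → ∃ d, ¬ IsUnit d ∧ (g m).1 = (g n).1 * d := by
    intro m n hmn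
    induction n with
    | zero => omega
    | succ k ih =>
        obtain ⟨c, hc, hgc⟩ := gstep k
        rcases Nat.lt_succ_iff_lt_or_eq.1 hmn with h | h
        · obtain ⟨d, hd, hgd⟩ := ih h
          refine ⟨c * d, ?_, by rw [hgd, hgc, mul_assoc]⟩
          intro hu
          exact hc (aux_unit_of_mul hucanc hu).1
        · exact ⟨c, hc, h ▸ hgc⟩
  -- choose words over S for each element of the chain
  have hword : ∀ n, ∃ l : List M, (∀ x ∈ l, x ∈ (S : Set M)) ∧ l.prod = (g n).1 := by
    intro n
    exact Submonoid.exists_list_of_mem_closure (by rw [hS]; trivial)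
  choose w hwS hwp using hword
  -- Higman's lemma
  have hpwo : {l : List M | ∀ x, x ∈ l → x ∈ (S : Set M)}.PartiallyWellOrderedOn
      (List.SublistForall₂ (· = ·)) :=
    (S.finite_toSet.partiallyWellOrderedOn).partiallyWellOrderedOn_sublistForall₂ (· = ·)
  obtain ⟨m, n, hmn, hsub⟩ := hpwo (fun n => ⟨w n, fun x hx => hwS n x hx⟩)
  -- convert to sublist
  have hsl : (w m).Sublist (w n) := by
    have hsub' : List.SublistForall₂ (· = ·) (w m) (w n) := hsub
    obtain ⟨l, hl, hls⟩ := List.sublistForall₂_iff.1 hsub'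
    rw [List.forall₂_eq_eq_eq] at hl
    rwa [hl]
  obtain ⟨e, he⟩ := aux_sublist_dvd hnorm hsl
  rw [hwp m, hwp n] at he
  obtain ⟨d, hd, hgd⟩ := gchain m n hmn
  have : (g m).1 = (g m).1 * (e * d) := by rw [← mul_assoc, ← he, ← hgd]
  exact hd (aux_unit_of_mul hucanc ((hucanc _ _).1 this)).2
end

section
/- Let M be a finitely-generated, reduced, normalizing, unit-cancellative monoid. Then the set of atoms A(M) is the unique irredundant generating set for M, and A(M) is finite. -/
/-- `X` is an irredundant generating set of `M`: `X` generates `M`, and no proper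
subset of `X` does. -/
def IsIrredundantGenSet {M : Type*} [Monoid M] (X : Set M) : Prop :=
  Submonoid.closure X = ⊤ ∧ ∀ Y ⊆ X, Submonoid.closure Y = ⊤ → Y = X

section Aux

variable {M : Type*} [Monoid M]

/-- In a reduced unit-cancellative monoid, a product with a non-unit left factor is a non-unit. -/
lemma aux_nonunit_mul (hred : ∀ u : M, IsUnit u → u = 1)
    (hucanc : ∀ a b : M, (a = a * b → IsUnit b) ∧ (a = b * a → IsUnit b))
    {b : M} (hb : ¬ IsUnit b) (c : M) : ¬ IsUnit (b * c) := by
  intro h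
  have h1 : b * c = 1 := hred _ h
  have h2 : b = b * (c * b) := by
    rw [← mul_assoc, h1, one_mul]
  have h3 : c * b = 1 := hred _ ((hucanc b (c * b)).1 h2)
  exact hb ⟨⟨b, c, h1, h3⟩, rfl⟩

lemma aux_list_prod_nonunit (hred : ∀ u : M, IsUnit u → u = 1)
    (hucanc : ∀ a b : M, (a = a * b → IsUnit b) ∧ (a = b * a → IsUnit b)) :
    ∀ l : List M, l ≠ [] → (∀ x ∈ l, ¬ IsUnit x) → ¬ IsUnit l.prod
  | [], h, _ => absurd rfl h
  | x :: t, _, hx => by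
      rw [List.prod_cons]
      exact aux_nonunit_mul hred hucanc (hx x List.mem_cons_self) _

/-- Extract the rightmost occurrence of `s` in a list. -/
lemma aux_last_occ {α : Type*} {s : α} :
    ∀ {w : List α}, s ∈ w → ∃ u z : List α, w = u ++ s :: z ∧ s ∉ z := by
  intro w
  induction w with
  | nil => intro h; exact absurd h List.not_mem_nil
  | cons a t ih =>
    intro hs
    by_cases h : s ∈ t
    · obtain ⟨u, z, h1, h2⟩ := ih h
      exact ⟨a :: u, z, by rw [h1]; rfl, h2⟩
    · have hsa : s = a := by
        rcases List.mem_cons.mp hs with h' | h'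
        · exact h'
        · exact absurd h' h
      exact ⟨[], t, by simp [hsa], h⟩

/-- Pull `s` to the right across a product of non-units, using normality. -/
lemma aux_pull (hred : ∀ u : M, IsUnit u → u = 1)
    (hnorm : ∀ a : M, {x : M | ∃ m, x = a * m} = {x : M | ∃ m, x = m * a})
    (hucanc : ∀ a b : M, (a = a * b → IsUnit b) ∧ (a = b * a → IsUnit b)) (s : M) :
    ∀ z : List M, (∀ t ∈ z, ¬ IsUnit t) →
      ∃ q : M, s * z.prod = q * s ∧ (z = [] → q = 1) ∧ (z ≠ [] → ¬ IsUnit q) := by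
  intro z
  induction z with
  | nil =>
    intro _
    exact ⟨1, by rw [List.prod_nil, mul_one, one_mul], fun _ => rfl, fun h => absurd rfl h⟩
  | cons t z' ih =>
    intro hz
    obtain ⟨q', hq', -, -⟩ := ih (fun x hx => hz x (List.mem_cons_of_mem _ hx))
    have hmem : s * t ∈ {x : M | ∃ m, x = s * m} := ⟨t, rfl⟩
    rw [hnorm s] at hmem
    obtain ⟨m, hm⟩ := hmem
    have hmnu : ¬ IsUnit m := by
      intro hu
      rw [hred _ hu, one_mul] at hm
      exact hz t List.mem_cons_self ((hucanc s t).1 hm.symm)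
    refine ⟨m * q', ?_, ?_, fun _ => aux_nonunit_mul hred hucanc hmnu _⟩
    · rw [List.prod_cons, ← mul_assoc, hm, mul_assoc, hq', ← mul_assoc]
    · intro h; exact absurd h (List.cons_ne_nil _ _)

/-- Refine a word over `X` to one using only non-unit letters. -/
lemma aux_refine (hred : ∀ u : M, IsUnit u → u = 1) {X : Set M} :
    ∀ l : List M, (∀ x ∈ l, x ∈ X) →
      ∃ l' : List M, (∀ x ∈ l', x ∈ X ∧ ¬ IsUnit x) ∧ l'.prod = l.prod := by
  intro l
  induction l with
  | nil => intro _; exact ⟨[], by intro x hx; exact absurd hx List.not_mem_nil, rfl⟩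
  | cons x t ih =>
    intro hl
    obtain ⟨l', h1, h2⟩ := ih (fun y hy => hl y (List.mem_cons_of_mem _ hy))
    by_cases hx : IsUnit x
    · exact ⟨l', h1, by rw [List.prod_cons, hred x hx, one_mul, h2]⟩
    · refine ⟨x :: l', ?_, by rw [List.prod_cons, List.prod_cons, h2]⟩
      intro y hy
      rcases List.mem_cons.mp hy with rfl | hy'
      · exact ⟨hl y List.mem_cons_self, hx⟩
      · exact h1 y hy'

/-- Every atom belongs to every generating set. -/
lemma aux_atom_mem (hred : ∀ u : M, IsUnit u → u = 1)
    (hucanc : ∀ a b : M, (a = a * b → IsUnit b) ∧ (a = b * a → IsUnit b)) {X : Set M}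
    (hX : Submonoid.closure X = ⊤) {a : M} (ha : IsAtomElem a) : a ∈ X := by
  have hmem : a ∈ Submonoid.closure X := by rw [hX]; trivial
  obtain ⟨l, hl, hprod⟩ := Submonoid.exists_list_of_mem_closure hmem
  obtain ⟨l', hl', hprod'⟩ := aux_refine hred l hl
  rw [hprod] at hprod'
  match l', hl', hprod' with
  | [], _, h => exact absurd (h ▸ isUnit_one) ha.1
  | [x], hx, h => rw [List.prod_cons, List.prod_nil, mul_one] at h; exact h ▸ (hx x List.mem_cons_self).1
  | x :: y :: t, hx, h =>
    rw [List.prod_cons] at h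
    rcases ha.2 x ((y :: t).prod) h.symm with hu | hu
    · exact absurd hu (hx x List.mem_cons_self).2
    · exact absurd hu (aux_list_prod_nonunit hred hucanc (y :: t) (List.cons_ne_nil _ _)
        (fun z hz => (hx z (List.mem_cons_of_mem _ hz)).2))

/-- Every element of a minimal finite generating set is an atom. -/
lemma aux_min_atoms (hred : ∀ u : M, IsUnit u → u = 1)
    (hnorm : ∀ a : M, {x : M | ∃ m, x = a * m} = {x : M | ∃ m, x = m * a})
    (hucanc : ∀ a b : M, (a = a * b → IsUnit b) ∧ (a = b * a → IsUnit b))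
    (T : Finset M) (hT : Submonoid.closure (↑T : Set M) = ⊤)
    (hmin : ∀ T' : Finset M, Submonoid.closure (↑T' : Set M) = ⊤ → T.card ≤ T'.card) :
    ∀ s ∈ T, IsAtomElem s := by
  classical
  -- 1 is not in T
  have h1T : (1 : M) ∉ T := by
    intro h1
    have hcl : Submonoid.closure (↑(T.erase 1) : Set M) = ⊤ := by
      rw [eq_top_iff, ← hT]
      apply Submonoid.closure_le.mpr
      intro x hx
      by_cases hx1 : x = 1
      · subst hx1; exact Submonoid.one_mem _
      · exact Submonoid.subset_closure (Finset.mem_coe.mpr (Finset.mem_erase.mpr ⟨hx1, hx⟩))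
    exact absurd (hmin _ hcl) (not_le.mpr (Finset.card_erase_lt_of_mem h1))
  have hTnu : ∀ x ∈ T, ¬ IsUnit x := by
    intro x hx hu
    rw [hred _ hu] at hx
    exact h1T hx
  intro s hs
  refine ⟨hTnu s hs, ?_⟩
  intro b c hbc
  by_contra hcon
  push_neg at hcon
  obtain ⟨hb, hc⟩ := hcon
  -- get words for b and c over T
  have hbcl : b ∈ Submonoid.closure (↑T : Set M) := by rw [hT]; trivial
  have hccl : c ∈ Submonoid.closure (↑T : Set M) := by rw [hT]; trivial
  obtain ⟨lb, hlb, hpb⟩ := Submonoid.exists_list_of_mem_closure hbcl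
  obtain ⟨lc, hlc, hpc⟩ := Submonoid.exists_list_of_mem_closure hccl
  have hlbne : lb ≠ [] := by
    intro h; rw [h, List.prod_nil] at hpb; exact hb (hpb ▸ isUnit_one)
  have hlcne : lc ≠ [] := by
    intro h; rw [h, List.prod_nil] at hpc; exact hc (hpc ▸ isUnit_one)
  set w : List M := lb ++ lc with hw
  have hwmem : ∀ x ∈ w, x ∈ (↑T : Set M) := by
    intro x hx
    rcases List.mem_append.mp hx with h | h
    · exact hlb x h
    · exact hlc x h
  have hwprod : w.prod = s := by
    rw [hw, List.prod_append, hpb, hpc, hbc]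
  have hwlen : 2 ≤ w.length := by
    rw [hw, List.length_append]
    have h1 : 1 ≤ lb.length := List.length_pos_iff.mpr hlbne
    have h2 : 1 ≤ lc.length := List.length_pos_iff.mpr hlcne
    omega
  by_cases hsw : s ∈ w
  · -- pulling argument
    obtain ⟨u, z, hwuz, hsz⟩ := aux_last_occ hsw
    have hznu : ∀ t ∈ z, ¬ IsUnit t := by
      intro t ht
      apply hTnu t
      apply Finset.mem_coe.mp
      apply hwmem t
      rw [hwuz]
      exact List.mem_append.mpr (Or.inr (List.mem_cons_of_mem _ ht))
    obtain ⟨q, hq, hq1, hqnu⟩ := aux_pull hred hnorm hucanc s z hznu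
    have hkey : s = (u.prod * q) * s := by
      conv_lhs => rw [← hwprod, hwuz]
      rw [List.prod_append, List.prod_cons, hq, ← mul_assoc]
    have huq : IsUnit (u.prod * q) := (hucanc s (u.prod * q)).2 hkey
    by_cases hu : u = []
    · by_cases hz : z = []
      · -- w = [s], contradiction with length
        rw [hwuz, hu, hz] at hwlen
        simp at hwlen
      · rw [hu, List.prod_nil, one_mul] at huq
        exact hqnu hz huq
    · have humem : ∀ t ∈ u, ¬ IsUnit t := by
        intro t ht
        apply hTnu t
        apply Finset.mem_coe.mp
        apply hwmem t
        rw [hwuz]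
        exact List.mem_append.mpr (Or.inl ht)
      have hupnu : ¬ IsUnit u.prod := aux_list_prod_nonunit hred hucanc u hu humem
      exact aux_nonunit_mul hred hucanc hupnu q huq
  · -- s not in its own word: T.erase s generates, contradiction with minimality
    have hwmem' : ∀ x ∈ w, x ∈ Submonoid.closure (↑(T.erase s) : Set M) := by
      intro x hx
      apply Submonoid.subset_closure
      apply Finset.mem_coe.mpr
      apply Finset.mem_erase.mpr
      exact ⟨fun h => hsw (h ▸ hx), Finset.mem_coe.mp (hwmem x hx)⟩
    have hscl : s ∈ Submonoid.closure (↑(T.erase s) : Set M) := by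
      have hp := Submonoid.list_prod_mem (Submonoid.closure (↑(T.erase s) : Set M)) hwmem'
      rwa [hwprod] at hp
    have hcl : Submonoid.closure (↑(T.erase s) : Set M) = ⊤ := by
      rw [eq_top_iff, ← hT]
      apply Submonoid.closure_le.mpr
      intro x hx
      by_cases hxs : x = s
      · subst hxs; exact hscl
      · exact Submonoid.subset_closure (Finset.mem_coe.mpr
          (Finset.mem_erase.mpr ⟨hxs, Finset.mem_coe.mp hx⟩))
    exact absurd (hmin _ hcl) (not_le.mpr (Finset.card_erase_lt_of_mem hs))

end Aux

theorem stmt_14 {M : Type*} [Monoid M]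
    (hfg : ∃ S : Finset M, Submonoid.closure (S : Set M) = ⊤)
    (hred : ∀ u : M, IsUnit u → u = 1)
    (hnorm : ∀ a : M, {x : M | ∃ m, x = a * m} = {x : M | ∃ m, x = m * a})
    (hucanc : ∀ a b : M, (a = a * b → IsUnit b) ∧ (a = b * a → IsUnit b)) :
    {a : M | IsAtomElem a}.Finite ∧
      IsIrredundantGenSet {a : M | IsAtomElem a} ∧
      ∀ X : Set M, IsIrredundantGenSet X → X = {a : M | IsAtomElem a} := by
  classical
  obtain ⟨S, hS⟩ := hfg
  have hex : ∃ n, ∃ T : Finset M, T.card = n ∧ Submonoid.closure (↑T : Set M) = ⊤ :=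
    ⟨S.card, S, rfl, hS⟩
  obtain ⟨T, hTcard, hT⟩ := Nat.find_spec hex
  have hmin : ∀ T' : Finset M, Submonoid.closure (↑T' : Set M) = ⊤ → T.card ≤ T'.card := by
    intro T' h
    rw [hTcard]
    exact Nat.find_min' hex ⟨T', rfl, h⟩
  have hTatoms : ∀ s ∈ T, IsAtomElem s := aux_min_atoms hred hnorm hucanc T hT hmin
  have hAsub : {a : M | IsAtomElem a} ⊆ ↑T := fun a ha => aux_atom_mem hred hucanc hT ha
  have hTsub : (↑T : Set M) ⊆ {a : M | IsAtomElem a} := fun s hs => hTatoms s hs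
  have hclA : Submonoid.closure {a : M | IsAtomElem a} = ⊤ := by
    rw [eq_top_iff, ← hT]
    exact Submonoid.closure_mono hTsub
  refine ⟨Set.Finite.subset T.finite_toSet hAsub, ⟨hclA, ?_⟩, ?_⟩
  · intro Y hY hYtop
    exact Set.Subset.antisymm hY (fun a ha => aux_atom_mem hred hucanc hYtop ha)
  · rintro X ⟨hXtop, hXmin⟩
    exact (hXmin _ (fun a ha => aux_atom_mem hred hucanc hXtop ha) hclA).symm
end

section
/- Let n > 1 and M = ⟨x, y | xy = y^n x⟩. Then for every k ∈ ℕ⁺, the k-th elasticity satisfies ρ_k(M) = n^{k−1} + k − 1, i.e., the maximum length of a word equal in M to a word of length k is n^{k−1} + k − 1. -/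
namespace Stmt18Aux

open FreeMonoid

/-- weight: each `y = 1` contributes `n ^ (number of x's to its left)`. -/
def Sw (n : ℕ) : List (Fin 2) → ℕ
  | [] => 0
  | i :: t => if i = 0 then n * Sw n t else 1 + Sw n t

lemma Sw_append (n : ℕ) (a b : List (Fin 2)) :
    Sw n (a ++ b) = Sw n a + n ^ (a.count 0) * Sw n b := by
  induction a with
  | nil => simp [Sw]
  | cons i t ih =>
    by_cases h : i = 0 <;>
      simp [Sw, h, ih, List.count_cons, pow_succ] <;> ring

lemma count0_replicate1 (m : ℕ) : (List.replicate m (1 : Fin 2)).count 0 = 0 := by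
  simp [List.count_replicate]

lemma Sw_replicate1 (n m : ℕ) : Sw n (List.replicate m (1 : Fin 2)) = m := by
  induction m with
  | zero => simp [Sw]
  | succ m ih => simp [List.replicate_succ, Sw, ih]; omega

lemma len_eq_counts (l : List (Fin 2)) : l.length = l.count 0 + l.count 1 := by
  induction l with
  | nil => simp
  | cons i t ih => fin_cases i <;> simp [List.count_cons, ih] <;> omega

lemma count1_le_Sw (n : ℕ) (hn : 1 ≤ n) (l : List (Fin 2)) : l.count 1 ≤ Sw n l := by
  induction l with
  | nil => simp
  | cons i t ih =>
    fin_cases i <;> simp [Sw, List.count_cons]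
    · calc t.count 1 ≤ Sw n t := ih
        _ ≤ n * Sw n t := Nat.le_mul_of_pos_left _ hn
    · omega

lemma Sw_le (n : ℕ) (hn : 1 ≤ n) (l : List (Fin 2)) :
    Sw n l ≤ l.count 1 * n ^ (l.count 0) := by
  induction l with
  | nil => simp [Sw]
  | cons i t ih =>
    fin_cases i <;> simp [Sw, List.count_cons, pow_succ]
    · calc n * Sw n t ≤ n * (t.count 1 * n ^ t.count 0) := Nat.mul_le_mul_left _ ih
        _ = t.count 1 * (n ^ t.count 0 * n) := by ring
    · have h1 : 1 ≤ n ^ t.count 0 := Nat.one_le_pow _ _ hn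
      calc 1 + Sw n t ≤ 1 + t.count 1 * n ^ t.count 0 := by omega
        _ ≤ n ^ t.count 0 + t.count 1 * n ^ t.count 0 := by omega
        _ = (t.count 1 + 1) * n ^ t.count 0 := by ring

/-- The invariant congruence. -/
def invCon (n : ℕ) : Con (FreeMonoid (Fin 2)) where
  r a b := a.toList.count 0 = b.toList.count 0 ∧ Sw n a.toList = Sw n b.toList
  iseqv := ⟨fun _ => ⟨rfl, rfl⟩, fun h => ⟨h.1.symm, h.2.symm⟩,
    fun h h' => ⟨h.1.trans h'.1, h.2.trans h'.2⟩⟩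
  mul' := by
    intro a b c d h h'
    constructor
    · simp [toList_mul, List.count_append, h.1, h'.1]
    · simp [toList_mul, Sw_append, h.1, h.2, h'.2]

lemma toList_pow (i : Fin 2) (m : ℕ) :
    (FreeMonoid.of i ^ m).toList = List.replicate m i := by
  induction m with
  | zero => rfl
  | succ m ih =>
    rw [pow_succ, toList_mul, ih, toList_of, ← List.replicate_succ']

lemma length_pow_of (i : Fin 2) (m : ℕ) : (FreeMonoid.of i ^ m).length = m := by
  induction m with
  | zero => rfl
  | succ m ih => simp [pow_succ, ih]

lemma invariant {n : ℕ} {R : Set (FreeMonoid (Fin 2) × FreeMonoid (Fin 2))}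
    (hR : R = {(FreeMonoid.of 0 * FreeMonoid.of 1, FreeMonoid.of 1 ^ n * FreeMonoid.of 0)})
    {a b : FreeMonoid (Fin 2)} (h : eqM R a b) :
    a.toList.count 0 = b.toList.count 0 ∧ Sw n a.toList = Sw n b.toList := by
  have key : conGen (fun x y => (x, y) ∈ R) ≤ invCon n := by
    refine Con.conGen_le.2 ?_
    rintro x y hxy
    subst hR
    simp only [Set.mem_singleton_iff, Prod.mk.injEq] at hxy
    obtain ⟨hx, hy⟩ := hxy
    subst hx; subst hy
    constructor
    · simp [toList_mul, toList_of, toList_pow, List.count_append, List.count_replicate,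
        List.count_cons]
    · simp [toList_mul, toList_of, toList_pow, Sw_append, Sw_replicate1, count0_replicate1, Sw]
  exact key h

section eqs

variable {n : ℕ} {R : Set (FreeMonoid (Fin 2) × FreeMonoid (Fin 2))}
  (hR : R = {(FreeMonoid.of 0 * FreeMonoid.of 1, FreeMonoid.of 1 ^ n * FreeMonoid.of 0)})

lemma bridge {u v : FreeMonoid (Fin 2)} (e : u = v) : eqM R u v :=
  e ▸ (conGen (fun x y => (x, y) ∈ R)).refl u

include hR

lemma base_rel : eqM R (FreeMonoid.of 0 * FreeMonoid.of 1)
    (FreeMonoid.of 1 ^ n * FreeMonoid.of 0) := by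
  exact ConGen.Rel.of _ _ (by simp [hR])

lemma eq1 (m : ℕ) : eqM R (FreeMonoid.of 0 * FreeMonoid.of 1 ^ m)
    (FreeMonoid.of 1 ^ (n * m) * FreeMonoid.of 0) := by
  induction m with
  | zero => exact bridge (by simp)
  | succ m ih =>
    have s0 : eqM R (FreeMonoid.of 0 * FreeMonoid.of 1 ^ (m + 1))
        ((FreeMonoid.of 0 * FreeMonoid.of 1) * FreeMonoid.of 1 ^ m) :=
      bridge (by rw [pow_succ', mul_assoc])
    have s1 : eqM R ((FreeMonoid.of 0 * FreeMonoid.of 1) * FreeMonoid.of 1 ^ m)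
        ((FreeMonoid.of 1 ^ n * FreeMonoid.of 0) * FreeMonoid.of 1 ^ m) :=
      (conGen (fun x y => (x, y) ∈ R)).mul (base_rel hR)
        ((conGen (fun x y => (x, y) ∈ R)).refl (FreeMonoid.of 1 ^ m))
    have s2 : eqM R ((FreeMonoid.of 1 ^ n * FreeMonoid.of 0) * FreeMonoid.of 1 ^ m)
        (FreeMonoid.of 1 ^ n * (FreeMonoid.of 0 * FreeMonoid.of 1 ^ m)) :=
      bridge (mul_assoc _ _ _)
    have s3 : eqM R (FreeMonoid.of 1 ^ n * (FreeMonoid.of 0 * FreeMonoid.of 1 ^ m))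
        (FreeMonoid.of 1 ^ n * (FreeMonoid.of 1 ^ (n * m) * FreeMonoid.of 0)) :=
      (conGen (fun x y => (x, y) ∈ R)).mul
        ((conGen (fun x y => (x, y) ∈ R)).refl (FreeMonoid.of 1 ^ n)) ih
    have s4 : eqM R (FreeMonoid.of 1 ^ n * (FreeMonoid.of 1 ^ (n * m) * FreeMonoid.of 0))
        (FreeMonoid.of 1 ^ (n * (m + 1)) * FreeMonoid.of 0) := by
      refine bridge ?_
      rw [← mul_assoc, ← pow_add]
      congr 2
      ring
    exact (conGen (fun x y => (x, y) ∈ R)).trans s0 <|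
      (conGen (fun x y => (x, y) ∈ R)).trans s1 <|
      (conGen (fun x y => (x, y) ∈ R)).trans s2 <|
      (conGen (fun x y => (x, y) ∈ R)).trans s3 s4

lemma eq2 (j : ℕ) : eqM R (FreeMonoid.of 0 ^ j * FreeMonoid.of 1)
    (FreeMonoid.of 1 ^ (n ^ j) * FreeMonoid.of 0 ^ j) := by
  induction j with
  | zero => exact bridge (by simp)
  | succ j ih =>
    have s0 : eqM R (FreeMonoid.of 0 ^ (j + 1) * FreeMonoid.of 1)
        (FreeMonoid.of 0 * (FreeMonoid.of 0 ^ j * FreeMonoid.of 1)) :=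
      bridge (by rw [pow_succ', mul_assoc])
    have s1 : eqM R (FreeMonoid.of 0 * (FreeMonoid.of 0 ^ j * FreeMonoid.of 1))
        (FreeMonoid.of 0 * (FreeMonoid.of 1 ^ (n ^ j) * FreeMonoid.of 0 ^ j)) :=
      (conGen (fun x y => (x, y) ∈ R)).mul
        ((conGen (fun x y => (x, y) ∈ R)).refl (FreeMonoid.of 0)) ih
    have s2 : eqM R (FreeMonoid.of 0 * (FreeMonoid.of 1 ^ (n ^ j) * FreeMonoid.of 0 ^ j))
        ((FreeMonoid.of 0 * FreeMonoid.of 1 ^ (n ^ j)) * FreeMonoid.of 0 ^ j) :=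
      bridge (mul_assoc _ _ _).symm
    have s3 : eqM R ((FreeMonoid.of 0 * FreeMonoid.of 1 ^ (n ^ j)) * FreeMonoid.of 0 ^ j)
        ((FreeMonoid.of 1 ^ (n * n ^ j) * FreeMonoid.of 0) * FreeMonoid.of 0 ^ j) :=
      (conGen (fun x y => (x, y) ∈ R)).mul (eq1 hR (n ^ j))
        ((conGen (fun x y => (x, y) ∈ R)).refl (FreeMonoid.of 0 ^ j))
    have s4 : eqM R ((FreeMonoid.of 1 ^ (n * n ^ j) * FreeMonoid.of 0) * FreeMonoid.of 0 ^ j)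
        (FreeMonoid.of 1 ^ (n ^ (j + 1)) * FreeMonoid.of 0 ^ (j + 1)) := by
      refine bridge ?_
      rw [mul_assoc, ← pow_succ', ← pow_succ']
    exact (conGen (fun x y => (x, y) ∈ R)).trans s0 <|
      (conGen (fun x y => (x, y) ∈ R)).trans s1 <|
      (conGen (fun x y => (x, y) ∈ R)).trans s2 <|
      (conGen (fun x y => (x, y) ∈ R)).trans s3 s4

end eqs

lemma arith (n k j c : ℕ) (hn : 1 < n) (hk : 0 < k) (hjc : j + c = k) :
    j + c * n ^ j ≤ n ^ (k - 1) + (k - 1) := by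
  rcases c with _ | c'
  · have h1 : 1 ≤ n ^ (k - 1) := Nat.one_le_pow _ _ (by omega)
    omega
  · have h2 : c' + 1 ≤ n ^ c' :=
      le_trans (Nat.lt_two_pow_self (n := c')) (Nat.pow_le_pow_left (by omega) c')
    have h3 : (c' + 1) * n ^ j ≤ n ^ c' * n ^ j := Nat.mul_le_mul_right _ h2
    have h4 : n ^ c' * n ^ j = n ^ (k - 1) := by
      rw [← pow_add]; congr 1; omega
    omega

end Stmt18Aux

/-- In `M = ⟨x, y | xy = yⁿx⟩` with `n > 1`, the `k`-th elasticity is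
`ρ_k(M) = n^(k-1) + k - 1`: the greatest length of a word equal in `M` to a word of
length `k` is `n^(k-1) + k - 1`. -/
theorem stmt_18 (n : ℕ) (hn : 1 < n) (k : ℕ) (hk : 0 < k) :
    letI R : Set (FreeMonoid (Fin 2) × FreeMonoid (Fin 2)) :=
      {(FreeMonoid.of 0 * FreeMonoid.of 1, FreeMonoid.of 1 ^ n * FreeMonoid.of 0)}
    IsGreatest {m : ℕ | ∃ a b : FreeMonoid (Fin 2),
        eqM R a b ∧ a.length = k ∧ b.length = m}
      (n ^ (k - 1) + k - 1) := by
  open Stmt18Aux FreeMonoid in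
  constructor
  · refine ⟨FreeMonoid.of 0 ^ (k - 1) * FreeMonoid.of 1,
      FreeMonoid.of 1 ^ (n ^ (k - 1)) * FreeMonoid.of 0 ^ (k - 1), eq2 rfl (k - 1), ?_, ?_⟩
    · simp [length_mul, length_pow_of, length_of]; omega
    · have h1 : 1 ≤ n ^ (k - 1) := Nat.one_le_pow _ _ (by omega)
      simp [length_mul, length_pow_of]; omega
  · rintro m ⟨a, b, hab, ha, hb⟩
    obtain ⟨h0, hS⟩ := invariant rfl hab
    have hla : a.toList.length = k := ha
    have hlb : b.toList.length = m := hb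
    have hka : a.toList.count 0 + a.toList.count 1 = k := by
      rw [← len_eq_counts, hla]
    have hmb : b.toList.count 0 + b.toList.count 1 = m := by
      rw [← len_eq_counts, hlb]
    have h1 : b.toList.count 1 ≤ Sw n b.toList := count1_le_Sw n (by omega) _
    have h2 : Sw n a.toList ≤ a.toList.count 1 * n ^ (a.toList.count 0) :=
      Sw_le n (by omega) _
    have h3 := arith n k (a.toList.count 0) (a.toList.count 1) hn hk hka
    have h4 : 1 ≤ n ^ (k - 1) := Nat.one_le_pow _ _ (by omega)
    omega
end

section
/- Let L be a nonempty collection of subsets of ℕ that is directed (subadditive, and 1 ∈ L₀ for some L₀ ∈ L), with ρ(L) < ∞. Then L has accepted elasticity if and only if there exists n ∈ ℕ⁺ with n·ρ(L) = ρ_n(L), if and only if there exists n ∈ ℕ⁺ such that kn·ρ(L) = ρ_{kn}(L) for all k ∈ ℕ⁺. -/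
open scoped Pointwise ENNReal

/-- The elasticity `ρ(L) = sup(L ∩ ℕ⁺) / min(L ∩ ℕ⁺)` of a set `L ⊆ ℕ`, valued in `ℝ≥0∞`,
with `ρ(L) = 0` if `L ∩ ℕ⁺ = ∅`. -/
noncomputable def setElasticity (L : Set ℕ) : ℝ≥0∞ :=
  open scoped Classical in
  if ({n ∈ L | 0 < n}).Nonempty then
    (⨆ n ∈ {n ∈ L | 0 < n}, (n : ℝ≥0∞)) / (sInf {n ∈ L | 0 < n} : ℕ)
  else 0

/-- The elasticity of a family of subsets of `ℕ`. -/
noncomputable def famElasticity (𝓛 : Set (Set ℕ)) : ℝ≥0∞ :=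
  ⨆ L ∈ 𝓛, setElasticity L

/-- `𝒰_k(𝓛)`: the union of the members of `𝓛` containing `k`. -/
def Uk (𝓛 : Set (Set ℕ)) (k : ℕ) : Set ℕ :=
  ⋃₀ {L ∈ 𝓛 | k ∈ L}

/-- `ρ_k(𝓛) = sup 𝒰_k(𝓛)`, valued in `ℝ≥0∞`. -/
noncomputable def rhoK (𝓛 : Set (Set ℕ)) (k : ℕ) : ℝ≥0∞ :=
  ⨆ n ∈ Uk 𝓛 k, (n : ℝ≥0∞)

/-- `𝓛` has accepted elasticity (given `𝓛 ≠ ∅`): the elasticity is attained. -/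
def HasAcceptedElasticity (𝓛 : Set (Set ℕ)) : Prop :=
  ∃ L₀ ∈ 𝓛, setElasticity L₀ = famElasticity 𝓛

lemma aux_sSup_mem {S : Set ℕ} (hS : S.Nonempty) (hfin : (⨆ n ∈ S, (n:ℝ≥0∞)) ≠ ⊤) :
    sSup S ∈ S ∧ (⨆ n ∈ S, (n:ℝ≥0∞)) = ((sSup S : ℕ) : ℝ≥0∞) := by
  obtain ⟨N, hN⟩ := ENNReal.exists_nat_gt hfin
  have hbdd : BddAbove S := ⟨N, fun x hx => by
    have hx' : (x:ℝ≥0∞) ≤ ⨆ n ∈ S, (n:ℝ≥0∞) := le_biSup (fun n : ℕ => (n:ℝ≥0∞)) hx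
    exact_mod_cast (hx'.trans_lt hN).le⟩
  have hmem := Nat.sSup_mem hS hbdd
  exact ⟨hmem, le_antisymm (iSup₂_le fun n hn => Nat.cast_le.2 (le_csSup hbdd hn))
    (le_biSup (fun n : ℕ => (n:ℝ≥0∞)) hmem)⟩

lemma setElasticity_le {𝓛 : Set (Set ℕ)} {L : Set ℕ} (hL : L ∈ 𝓛) :
    setElasticity L ≤ famElasticity 𝓛 :=
  le_iSup₂ (f := fun L _ => setElasticity L) L hL

/-- Main structural facts about a member with a positive element. -/
lemma elas_facts {𝓛 : Set (Set ℕ)} (hfin : famElasticity 𝓛 < ⊤) {L : Set ℕ} (hL : L ∈ 𝓛)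
    (hP : ({n ∈ L | 0 < n}).Nonempty) :
    (sSup {n ∈ L | 0 < n} : ℕ) ∈ {n ∈ L | 0 < n} ∧
    (⨆ n ∈ {n ∈ L | 0 < n}, (n:ℝ≥0∞)) = ((sSup {n ∈ L | 0 < n} : ℕ) : ℝ≥0∞) ∧
    setElasticity L
      = ((sSup {n ∈ L | 0 < n} : ℕ) : ℝ≥0∞) / ((sInf {n ∈ L | 0 < n} : ℕ) : ℝ≥0∞) := by
  set P := {n ∈ L | 0 < n}
  have hmInf : sInf P ∈ P := Nat.sInf_mem hP
  have hm0 : ((sInf P : ℕ) : ℝ≥0∞) ≠ 0 := by exact_mod_cast hmInf.2.ne'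
  have hmt : ((sInf P : ℕ) : ℝ≥0∞) ≠ ⊤ := ENNReal.natCast_ne_top _
  have helas : setElasticity L = (⨆ n ∈ P, (n:ℝ≥0∞)) / ((sInf P : ℕ) : ℝ≥0∞) := by
    unfold setElasticity
    rw [if_pos hP]
  have hlt : setElasticity L < ⊤ := (setElasticity_le hL).trans_lt hfin
  have hsupfin : (⨆ n ∈ P, (n:ℝ≥0∞)) ≠ ⊤ := by
    intro h
    rw [helas, h, ENNReal.top_div_of_ne_top hmt] at hlt
    exact (lt_irrefl _ hlt)
  obtain ⟨hmem, heq⟩ := aux_sSup_mem hP hsupfin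
  exact ⟨hmem, heq, by rw [helas, heq]⟩

lemma rhoK_le_mul {𝓛 : Set (Set ℕ)} (hfin : famElasticity 𝓛 < ⊤) {k : ℕ} (hk : 0 < k) :
    rhoK 𝓛 k ≤ (k : ℝ≥0∞) * famElasticity 𝓛 := by
  refine iSup₂_le fun n hn => ?_
  obtain ⟨L, ⟨hL, hkL⟩, hnL⟩ := hn
  rcases Nat.eq_zero_or_pos n with rfl | hn0
  · simp
  have hP : ({m ∈ L | 0 < m}).Nonempty := ⟨n, hnL, hn0⟩
  obtain ⟨hMmem, hsup, helas⟩ := elas_facts hfin hL hP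
  have hkP : k ∈ {m ∈ L | 0 < m} := ⟨hkL, hk⟩
  have hmlek : ((sInf {m ∈ L | 0 < m} : ℕ) : ℝ≥0∞) ≤ (k : ℝ≥0∞) := by
    exact_mod_cast Nat.sInf_le hkP
  have hm0 : ((sInf {m ∈ L | 0 < m} : ℕ) : ℝ≥0∞) ≠ 0 := by
    exact_mod_cast (Nat.sInf_mem hP).2.ne'
  have hmt : ((sInf {m ∈ L | 0 < m} : ℕ) : ℝ≥0∞) ≠ ⊤ := ENNReal.natCast_ne_top _
  calc (n : ℝ≥0∞) ≤ ⨆ m ∈ {m ∈ L | 0 < m}, (m:ℝ≥0∞) :=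
        le_biSup (fun m : ℕ => (m:ℝ≥0∞)) (⟨hnL, hn0⟩ : n ∈ {m ∈ L | 0 < m})
    _ = ((sSup {m ∈ L | 0 < m} : ℕ) : ℝ≥0∞) := hsup
    _ = setElasticity L * ((sInf {m ∈ L | 0 < m} : ℕ) : ℝ≥0∞) := by
        rw [helas, ENNReal.div_mul_cancel hm0 hmt]
    _ ≤ famElasticity 𝓛 * (k : ℝ≥0∞) := mul_le_mul' (setElasticity_le hL) hmlek
    _ = (k : ℝ≥0∞) * famElasticity 𝓛 := mul_comm _ _

lemma one_le_fam {𝓛 : Set (Set ℕ)} (hdir : ∃ L₀ ∈ 𝓛, (1 : ℕ) ∈ L₀) :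
    1 ≤ famElasticity 𝓛 := by
  obtain ⟨L₀, hL₀, h1⟩ := hdir
  have h1P : (1:ℕ) ∈ {n ∈ L₀ | 0 < n} := ⟨h1, one_pos⟩
  have hP : ({n ∈ L₀ | 0 < n}).Nonempty := ⟨1, h1P⟩
  have hinf : sInf {n ∈ L₀ | 0 < n} = 1 :=
    le_antisymm (Nat.sInf_le h1P) (Nat.sInf_mem hP).2
  have : (1:ℝ≥0∞) ≤ setElasticity L₀ := by
    unfold setElasticity
    rw [if_pos hP, hinf]
    simp only [Nat.cast_one, div_one]
    simpa using le_biSup (fun n : ℕ => (n:ℝ≥0∞)) h1P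
  exact this.trans (setElasticity_le hL₀)

lemma scale_mem {𝓛 : Set (Set ℕ)} (hsub : ∀ L₁ ∈ 𝓛, ∀ L₂ ∈ 𝓛, ∃ L₃ ∈ 𝓛, L₁ + L₂ ⊆ L₃)
    {L₀ : Set ℕ} (hL₀ : L₀ ∈ 𝓛) : ∀ k : ℕ, ∃ Lk ∈ 𝓛, ∀ x ∈ L₀, (k+1)*x ∈ Lk := by
  intro k
  induction k with
  | zero => exact ⟨L₀, hL₀, fun x hx => by simpa using hx⟩
  | succ k ih =>
    obtain ⟨Lk, hLk, hmul⟩ := ih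
    obtain ⟨L', hL', hsub'⟩ := hsub Lk hLk L₀ hL₀
    refine ⟨L', hL', fun x hx => ?_⟩
    have : (k+1)*x + x ∈ Lk + L₀ := Set.add_mem_add (hmul x hx) hx
    have h2 : (k+2)*x = (k+1)*x + x := by ring
    rw [h2]
    exact hsub' this

lemma mul_div_cancel_left' {a b : ℝ≥0∞} (h0 : a ≠ 0) (ht : a ≠ ⊤) : a * b / a = b := by
  rw [mul_comm, mul_div_assoc, ENNReal.div_self h0 ht, mul_one]

theorem stmt_19 (𝓛 : Set (Set ℕ)) (hne : 𝓛.Nonempty)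
    (hsub : ∀ L₁ ∈ 𝓛, ∀ L₂ ∈ 𝓛, ∃ L₃ ∈ 𝓛, L₁ + L₂ ⊆ L₃)
    (hdir : ∃ L₀ ∈ 𝓛, (1 : ℕ) ∈ L₀)
    (hfin : famElasticity 𝓛 < ⊤) :
    (HasAcceptedElasticity 𝓛 ↔
        ∃ n : ℕ, 0 < n ∧ (n : ℝ≥0∞) * famElasticity 𝓛 = rhoK 𝓛 n) ∧
      (HasAcceptedElasticity 𝓛 ↔
        ∃ n : ℕ, 0 < n ∧ ∀ k : ℕ, 0 < k →
          ((k * n : ℕ) : ℝ≥0∞) * famElasticity 𝓛 = rhoK 𝓛 (k * n)) := by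
  have h1ρ : 1 ≤ famElasticity 𝓛 := one_le_fam hdir
  have hρ0 : famElasticity 𝓛 ≠ 0 := fun h => by simp [h] at h1ρ
  have hρt : famElasticity 𝓛 ≠ ⊤ := hfin.ne
  -- Forward: accepted elasticity gives the strong (∀ k) statement.
  have hfwd : HasAcceptedElasticity 𝓛 →
      ∃ n : ℕ, 0 < n ∧ ∀ k : ℕ, 0 < k →
        ((k * n : ℕ) : ℝ≥0∞) * famElasticity 𝓛 = rhoK 𝓛 (k * n) := by
    rintro ⟨L₀, hL₀, hacc⟩
    have hP : ({n ∈ L₀ | 0 < n}).Nonempty := by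
      by_contra h
      rw [show setElasticity L₀ = 0 by unfold setElasticity; rw [if_neg h]] at hacc
      exact hρ0 hacc.symm
    obtain ⟨hMmem, hsup, helas⟩ := elas_facts hfin hL₀ hP
    set m := sInf {n ∈ L₀ | 0 < n} with hm_def
    set M := sSup {n ∈ L₀ | 0 < n} with hM_def
    have hmP : m ∈ {n ∈ L₀ | 0 < n} := Nat.sInf_mem hP
    have hm0 : 0 < m := hmP.2
    have hm0' : (m : ℝ≥0∞) ≠ 0 := by exact_mod_cast hm0.ne'
    have hmt : (m : ℝ≥0∞) ≠ ⊤ := ENNReal.natCast_ne_top _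
    have hρeq : famElasticity 𝓛 = (M : ℝ≥0∞) / (m : ℝ≥0∞) := by rw [← hacc, helas]
    refine ⟨m, hm0, fun k hk => ?_⟩
    obtain ⟨Lk, hLk, hmul⟩ := scale_mem hsub hL₀ (k - 1)
    have hk1 : k - 1 + 1 = k := Nat.succ_pred_eq_of_pos hk
    have hkm : k * m ∈ Lk := by
      have := hmul m hmP.1; rwa [hk1] at this
    have hkM : k * M ∈ Lk := by
      have := hmul M hMmem.1; rwa [hk1] at this
    refine le_antisymm ?_ (rhoK_le_mul hfin (Nat.mul_pos hk hm0))
    have hval : ((k * m : ℕ) : ℝ≥0∞) * famElasticity 𝓛 = ((k * M : ℕ) : ℝ≥0∞) := by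
      rw [hρeq]
      push_cast
      rw [mul_assoc, mul_comm (m : ℝ≥0∞), ENNReal.div_mul_cancel hm0' hmt]
    rw [hval]
    exact le_biSup (fun n : ℕ => (n : ℝ≥0∞)) (⟨Lk, ⟨hLk, hkm⟩, hkM⟩ : k * M ∈ Uk 𝓛 (k * m))
  -- Backward: the weak statement gives accepted elasticity.
  have hbwd : (∃ n : ℕ, 0 < n ∧ (n : ℝ≥0∞) * famElasticity 𝓛 = rhoK 𝓛 n) →
      HasAcceptedElasticity 𝓛 := by
    rintro ⟨n, hn0, hn⟩
    have hn0' : (n : ℝ≥0∞) ≠ 0 := by exact_mod_cast hn0.ne'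
    have hnt : (n : ℝ≥0∞) ≠ ⊤ := ENNReal.natCast_ne_top _
    have hrt : rhoK 𝓛 n ≠ ⊤ := by
      rw [← hn]; exact ENNReal.mul_ne_top hnt hρt
    have hr0 : rhoK 𝓛 n ≠ 0 := by
      rw [← hn]; exact mul_ne_zero hn0' hρ0
    have hUne : (Uk 𝓛 n).Nonempty := by
      by_contra h
      rw [Set.not_nonempty_iff_eq_empty] at h
      exact hr0 (by simp [rhoK, h])
    obtain ⟨hMU, hMeq⟩ := aux_sSup_mem hUne hrt
    set M := sSup (Uk 𝓛 n) with hM_def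
    obtain ⟨L, ⟨hL, hnL⟩, hML⟩ := hMU
    have hP : ({m ∈ L | 0 < m}).Nonempty := ⟨n, hnL, hn0⟩
    obtain ⟨hMLmem, hsup, helas⟩ := elas_facts hfin hL hP
    set ML := sSup {m ∈ L | 0 < m} with hML_def
    set mL := sInf {m ∈ L | 0 < m} with hmL_def
    have hmLn : mL ≤ n := Nat.sInf_le ⟨hnL, hn0⟩
    have hrM : rhoK 𝓛 n = (M : ℝ≥0∞) := hMeq
    -- M ≤ ML
    have hM0 : 0 < M := by
      by_contra h
      push_neg at h
      interval_cases M
      exact hr0 (by rw [hrM]; simp)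
    have hMle : M ≤ ML := by
      have : (M : ℝ≥0∞) ≤ ⨆ m ∈ {m ∈ L | 0 < m}, (m : ℝ≥0∞) :=
        le_biSup (fun m : ℕ => (m : ℝ≥0∞)) (⟨hML, hM0⟩ : M ∈ {m ∈ L | 0 < m})
      rw [hsup] at this
      exact_mod_cast this
    have hMge : ML ≤ M := by
      have : (ML : ℝ≥0∞) ≤ rhoK 𝓛 n :=
        le_biSup (fun m : ℕ => (m : ℝ≥0∞)) (⟨L, ⟨hL, hnL⟩, hMLmem.1⟩ : ML ∈ Uk 𝓛 n)
      rw [hrM] at this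
      exact_mod_cast this
    have hMLM : ML = M := le_antisymm hMge hMle
    refine ⟨L, hL, le_antisymm (setElasticity_le hL) ?_⟩
    have hρle : famElasticity 𝓛 = (M : ℝ≥0∞) / (n : ℝ≥0∞) := by
      rw [← hrM, ← hn, mul_div_cancel_left' hn0' hnt]
    rw [helas, hMLM, hρle]
    exact ENNReal.div_le_div_left (by exact_mod_cast hmLn) _
  have hmid : (∃ n : ℕ, 0 < n ∧ ∀ k : ℕ, 0 < k →
        ((k * n : ℕ) : ℝ≥0∞) * famElasticity 𝓛 = rhoK 𝓛 (k * n)) →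
      ∃ n : ℕ, 0 < n ∧ (n : ℝ≥0∞) * famElasticity 𝓛 = rhoK 𝓛 n := by
    rintro ⟨n, hn0, hall⟩
    have := hall 1 one_pos
    rw [one_mul] at this
    exact ⟨n, hn0, by exact_mod_cast this⟩
  exact ⟨⟨fun h => hmid (hfwd h), hbwd⟩, ⟨hfwd, fun h => hbwd (hmid h)⟩⟩
end
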